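/- arXiv:1809.04672 — 8 statements merged into one kernel-verified Lean document; each statement's English description precedes it below -/
import Mathlib

section
/- Let H be a complex Hilbert space and T a densely defined unbounded linear operator on H (a LinearPMap) whose adjoint satisfies T† = -T (T is skew-adjoint). Then for every nonzero real number s and every g ∈ H there exists a unique element f of the domain of T such that T f + s • f = g, and this f satisfies ‖f‖ ≤ |s|⁻¹ ‖g‖. -/
/-!
Since `T† = -T`, the real part of `⟪T x, x⟫` vanishes, so `‖T x + s x‖² = ‖T x‖² + s² ‖x‖²`.
This makes `T + s` injective with `‖x‖ ≤ |s|⁻¹ ‖(T + s) x‖`, and, since `(x, T x) ↦ T x + s x` is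
then bounded below on the graph of `T`, which is complete as `T = -T†` is closed, gives `T + s` a
closed range. A vector `v` orthogonal to that range lies in the domain of `T†` with
`T† v = -s v`, that is `T v - s v = 0`, so `v = 0` by the same identity for `-s`; hence the range
is everything.
-/

open scoped InnerProductSpace

theorem Submodule.isClosed_image_of_norm_le {𝕜 E F : Type*} [NormedField 𝕜]
    [NormedAddCommGroup E] [NormedSpace 𝕜 E] [CompleteSpace E]
    [NormedAddCommGroup F] [NormedSpace 𝕜 F]
    {V : Submodule 𝕜 E} (hV : IsClosed (V : Set E)) (Φ : E →L[𝕜] F) (K : ℝ)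
    (hΦ : ∀ v ∈ V, ‖v‖ ≤ K * ‖Φ v‖) : IsClosed (Φ '' V) := by
  have := hV.completeSpace_coe
  have hanti : AntilipschitzWith K.toNNReal (Φ.comp V.subtypeL) :=
    AddMonoidHomClass.antilipschitz_of_bound _ fun v ↦
      (hΦ v v.2).trans (mul_le_mul_of_nonneg_right (Real.le_coe_toNNReal K) (norm_nonneg _))
  rw [Set.image_eq_range]
  exact hanti.isClosed_range (Φ.comp V.subtypeL).uniformContinuous

namespace LinearPMap

theorem IsClosed.neg {R E F : Type*} [CommRing R] [AddCommGroup E] [Module R E]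
    [AddCommGroup F] [Module R F] [TopologicalSpace E] [TopologicalSpace F] [ContinuousNeg F]
    {f : E →ₗ.[R] F} (hf : f.IsClosed) : (-f).IsClosed := by
  rw [LinearPMap.IsClosed, neg_graph, Submodule.map_coe]
  change _root_.IsClosed (Prod.map id Neg.neg '' (f.graph : Set (E × F)))
  have hinv : Function.Involutive (Prod.map (id : E → E) (Neg.neg : F → F)) :=
    Function.Involutive.prodMap (fun _ ↦ rfl) neg_involutive
  rw [hinv.image_eq_preimage_symm]
  exact hf.preimage (continuous_id.prodMap continuous_neg)

variable {𝕜 E : Type*} [RCLike 𝕜] [NormedAddCommGroup E] [InnerProductSpace 𝕜 E]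

def shift (T : E →ₗ.[𝕜] E) (c : 𝕜) : T.domain →ₗ[𝕜] E := T.toFun + c • T.domain.subtype

@[simp]
theorem shift_apply (T : E →ₗ.[𝕜] E) (c : 𝕜) (x : T.domain) : T.shift c x = T x + c • (x : E) :=
  rfl

variable [CompleteSpace E]

theorem exists_adjoint_apply_eq {T : E →ₗ.[𝕜] E} (hT : Dense (T.domain : Set E)) {v w : E}
    (h : ∀ x : T.domain, ⟪w, x⟫_𝕜 = ⟪v, T x⟫_𝕜) : ∃ hv : v ∈ T†.domain, T† ⟨v, hv⟩ = w :=
  ⟨mem_adjoint_domain_of_exists v ⟨w, h⟩, adjoint_apply_eq hT ⟨v, _⟩ h⟩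

def IsSkewAdjoint (T : E →ₗ.[𝕜] E) : Prop := T† = -T

namespace IsSkewAdjoint

variable {T : E →ₗ.[𝕜] E} (hT : Dense (T.domain : Set E)) (hskew : T.IsSkewAdjoint)
include hT hskew

theorem isFormalAdjoint_neg : T.IsFormalAdjoint (-T) := by
  have h := adjoint_isFormalAdjoint hT
  rw [hskew] at h
  exact h.symm

theorem re_inner_map_self (x : T.domain) : RCLike.re ⟪T x, x⟫_𝕜 = 0 := by
  have h := congrArg RCLike.re (isFormalAdjoint_neg hT hskew x x)
  rw [neg_apply, inner_neg_right, AddMonoidHom.map_neg, inner_re_symm] at h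
  rw [inner_re_symm]
  linarith

theorem norm_shift_sq (s : ℝ) (x : T.domain) :
    ‖T.shift (s : 𝕜) x‖ ^ 2 = ‖T x‖ ^ 2 + (|s| * ‖(x : E)‖) ^ 2 := by
  rw [shift_apply, norm_add_sq (𝕜 := 𝕜), inner_smul_right, RCLike.re_ofReal_mul,
    re_inner_map_self hT hskew, norm_smul, RCLike.norm_ofReal]
  ring

theorem norm_map_le_norm_shift (s : ℝ) (x : T.domain) : ‖T x‖ ≤ ‖T.shift (s : 𝕜) x‖ :=
  le_of_pow_le_pow_left₀ two_ne_zero (norm_nonneg _)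
    (norm_shift_sq hT hskew s x ▸ le_add_of_nonneg_right (sq_nonneg _))

theorem abs_mul_norm_le_norm_shift (s : ℝ) (x : T.domain) :
    |s| * ‖(x : E)‖ ≤ ‖T.shift (s : 𝕜) x‖ :=
  le_of_pow_le_pow_left₀ two_ne_zero (norm_nonneg _)
    (norm_shift_sq hT hskew s x ▸ le_add_of_nonneg_left (sq_nonneg _))

theorem isClosed : T.IsClosed := by
  have h := (adjoint_isClosed hT).neg
  rwa [hskew, neg_neg] at h

theorem isClosed_range_shift {s : ℝ} (hs : s ≠ 0) :
    _root_.IsClosed (LinearMap.range (T.shift (s : 𝕜)) : Set E) := by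
  let Φ : E × E →L[𝕜] E := .snd 𝕜 E E + (s : 𝕜) • .fst 𝕜 E E
  have hrange : (LinearMap.range (T.shift (s : 𝕜)) : Set E) = Φ '' T.graph := by
    ext y
    constructor
    · rintro ⟨x, rfl⟩
      exact ⟨((x : E), T x), T.mem_graph x, rfl⟩
    · rintro ⟨⟨a, b⟩, hp, rfl⟩
      obtain ⟨x, rfl, rfl⟩ := (mem_graph_iff T).mp hp
      exact ⟨x, rfl⟩
  rw [hrange]
  refine Submodule.isClosed_image_of_norm_le (isClosed hT hskew) Φ (|s|⁻¹ + 1) ?_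
  rintro ⟨a, b⟩ hp
  obtain ⟨x, rfl, rfl⟩ := (mem_graph_iff T).mp hp
  change max ‖(x : E)‖ ‖T x‖ ≤ (|s|⁻¹ + 1) * ‖T.shift (s : 𝕜) x‖
  have hx : ‖(x : E)‖ ≤ |s|⁻¹ * ‖T.shift (s : 𝕜) x‖ :=
    (le_inv_mul_iff₀ (abs_pos.mpr hs)).mpr (abs_mul_norm_le_norm_shift hT hskew s x)
  have hN := norm_nonneg (T.shift (s : 𝕜) x)
  have hsN := mul_nonneg (inv_nonneg.mpr (abs_nonneg s)) hN
  exact max_le (by linarith) (by linarith [norm_map_le_norm_shift hT hskew s x])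

theorem orthogonal_range_shift_eq_bot {s : ℝ} (hs : s ≠ 0) :
    (LinearMap.range (T.shift (s : 𝕜)))ᗮ = ⊥ := by
  rw [Submodule.eq_bot_iff]
  intro v hv
  have hvT : ∀ x : T.domain, ⟪-((s : 𝕜) • v), x⟫_𝕜 = ⟪v, T x⟫_𝕜 := by
    intro x
    have h := Submodule.inner_left_of_mem_orthogonal (LinearMap.mem_range_self _ x) hv
    rw [shift_apply, inner_add_right, inner_smul_right] at h
    rw [inner_neg_left, inner_smul_left, RCLike.conj_ofReal]
    linear_combination -h
  have hv' := exists_adjoint_apply_eq hT hvT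
  rw [hskew] at hv'
  obtain ⟨hvdom, hTv⟩ := hv'
  rw [neg_apply, neg_inj] at hTv
  have h := abs_mul_norm_le_norm_shift hT hskew (-s) ⟨v, hvdom⟩
  rw [shift_apply, hTv, RCLike.ofReal_neg, neg_smul, add_neg_cancel, norm_zero, abs_neg] at h
  exact norm_le_zero_iff.mp (by nlinarith [abs_pos.mpr hs, norm_nonneg v])

theorem shift_bijective {s : ℝ} (hs : s ≠ 0) : Function.Bijective (T.shift (s : 𝕜)) := by
  refine ⟨(injective_iff_map_eq_zero _).mpr fun x hx ↦ ?_, ?_⟩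
  · have h := abs_mul_norm_le_norm_shift hT hskew s x
    rw [hx, norm_zero] at h
    exact Submodule.coe_eq_zero.mp
      (norm_le_zero_iff.mp (by nlinarith [abs_pos.mpr hs, norm_nonneg (x : E)]))
  · have := (isClosed_range_shift hT hskew hs).completeSpace_coe
    exact LinearMap.range_eq_top.mp
      (Submodule.orthogonal_eq_bot_iff.mp (orthogonal_range_shift_eq_bot hT hskew hs))

end IsSkewAdjoint

end LinearPMap

/-- Existence, uniqueness and a priori bound for the twisted equation `(T + s)f = g`
for a densely defined skew-adjoint operator `T` (i.e. `T† = -T`). -/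
theorem stmt_1 {H : Type*} [NormedAddCommGroup H] [InnerProductSpace ℂ H] [CompleteSpace H]
    (T : H →ₗ.[ℂ] H) (hT : Dense (T.domain : Set H)) (hadj : T.adjoint = -T)
    (s : ℝ) (hs : s ≠ 0) (g : H) :
    ∃ f : T.domain, (T f + (s : ℂ) • (f : H) = g ∧ ‖(f : H)‖ ≤ |s|⁻¹ * ‖g‖) ∧
      ∀ f' : T.domain, T f' + (s : ℂ) • ((f' : H)) = g → f' = f := by
  have hbij := LinearPMap.IsSkewAdjoint.shift_bijective hT hadj hs
  obtain ⟨f, hf⟩ := hbij.2 g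
  refine ⟨f, ⟨hf, ?_⟩, fun f' hf' ↦ hbij.1 (hf'.trans hf.symm)⟩
  exact (le_inv_mul_iff₀ (abs_pos.mpr hs)).mpr
    (hf ▸ LinearPMap.IsSkewAdjoint.abs_mul_norm_le_norm_shift hT hadj s f)
end

section
/- Let a > 0 and let f : (0,∞) → ℂ be measurable with ∫₀^∞ |f(r)|² dr/r < ∞ and ∫₀^∞ |f(r)|² r^{-2a} dr/r < ∞. Then for every z ∈ ℂ with -a < Re z < 0 the integral ∫₀^∞ f(r) r^z dr/r converges absolutely, and the Mellin transform z ↦ mellin f z is holomorphic (complex differentiable) on the open vertical strip {z : -a < Re z < 0}. -/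
/-!
For `α < σ < β`, AM–GM gives `r^(σ-1) ‖f r‖ ≤ (‖f r‖² r^(2α-1) + r^(2(σ-α)-1)) / 2`, and the last
term is integrable near `0`; with `β` in place of `α` it is integrable near `∞`. So `f` in
`L²(r^(2α) dr/r) ∩ L²(r^(2β) dr/r)` has an absolutely convergent Mellin integral on `α < Re z < β`,
here with `α = -a`, `β = 0`. Holomorphy comes from differentiating under the integral sign:
since `|log t| ≤ (t^ε + t^(-ε)) / ε`, the `z`-derivative `t^(z-1) log t f(t)` on a disc of
radius `ε` around `s` is dominated by the absolutely convergent integrands at `Re s ± 2ε`.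
-/

open MeasureTheory Set

namespace Real

lemma abs_log_le_rpow_add_rpow_neg_div {ε t : ℝ} (hε : 0 < ε) (ht : 0 < t) :
    |log t| ≤ (t ^ ε + t ^ (-ε)) / ε := by
  have hpos : log t ≤ t ^ ε / ε := log_le_rpow_div ht.le hε
  have hneg : -log t ≤ t ^ (-ε) / ε := by
    rw [← log_inv, rpow_neg ht.le, ← inv_rpow ht.le]
    exact log_le_rpow_div (inv_nonneg.2 ht.le) hε
  have : 0 ≤ t ^ ε / ε := by positivity
  have : 0 ≤ t ^ (-ε) / ε := by positivity
  rw [add_div]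
  exact abs_le'.2 ⟨by linarith, by linarith⟩

lemma rpow_le_rpow_add_rpow {t x y₁ y₂ : ℝ} (ht : 0 < t) (h₁ : y₁ ≤ x) (h₂ : x ≤ y₂) :
    t ^ x ≤ t ^ y₁ + t ^ y₂ := by
  rcases le_or_gt 1 t with h | h
  · exact le_add_of_nonneg_of_le (by positivity) (rpow_le_rpow_of_exponent_le h h₂)
  · exact le_add_of_le_of_nonneg (rpow_le_rpow_of_exponent_ge ht h.le h₁) (by positivity)

lemma rpow_mul_abs_log_le {t x y ε : ℝ} (ht : 0 < t) (hε : 0 < ε) (hxy : |x - y| ≤ ε) :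
    t ^ x * |log t| ≤ 2 / ε * (t ^ (y - 2 * ε) + t ^ (y + 2 * ε)) := by
  obtain ⟨hl, hr⟩ := abs_le.1 hxy
  have hup := rpow_le_rpow_add_rpow ht (x := x + ε) (y₁ := y - 2 * ε) (y₂ := y + 2 * ε)
    (by linarith) (by linarith)
  have hdown := rpow_le_rpow_add_rpow ht (x := x - ε) (y₁ := y - 2 * ε) (y₂ := y + 2 * ε)
    (by linarith) (by linarith)
  calc t ^ x * |log t| ≤ t ^ x * ((t ^ ε + t ^ (-ε)) / ε) := by
        gcongr; exact abs_log_le_rpow_add_rpow_neg_div hε ht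
    _ = (t ^ (x + ε) + t ^ (x - ε)) / ε := by
        rw [rpow_add ht, sub_eq_add_neg, rpow_add ht]; ring
    _ ≤ 2 / ε * (t ^ (y - 2 * ε) + t ^ (y + 2 * ε)) := by
        rw [div_mul_eq_mul_div]; gcongr; linarith

lemma two_mul_rpow_mul_le {r : ℝ} (hr : 0 < r) (x α σ : ℝ) :
    2 * (r ^ (σ - 1) * x) ≤ x ^ 2 * r ^ (2 * α - 1) + r ^ (2 * (σ - α) - 1) := by
  set u := r ^ (α - 1 / 2)
  set v := r ^ (σ - α - 1 / 2)
  have huv : r ^ (σ - 1) = u * v := by rw [← rpow_add hr]; ring_nf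
  have hu : r ^ (2 * α - 1) = u ^ 2 := by rw [sq, ← rpow_add hr]; ring_nf
  have hv : r ^ (2 * (σ - α) - 1) = v ^ 2 := by rw [sq, ← rpow_add hr]; ring_nf
  rw [huv, hu, hv]
  linarith [two_mul_le_add_sq (x * u) v]

end Real

section WeightedL2

variable {E : Type*} [NormedAddCommGroup E] {f : ℝ → E} {α β σ : ℝ}

lemma integrableOn_rpow_mul_norm_of_sq_mul_rpow {S : Set ℝ} (hS : MeasurableSet S)
    (hS0 : S ⊆ Ioi 0) (hf : AEStronglyMeasurable f (volume.restrict S))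
    (hα : IntegrableOn (fun r => ‖f r‖ ^ 2 * r ^ (2 * α - 1)) S)
    (hpow : IntegrableOn (fun r : ℝ => r ^ (2 * (σ - α) - 1)) S) :
    IntegrableOn (fun r => r ^ (σ - 1) * ‖f r‖) S := by
  refine ((hα.add hpow).div_const 2).mono'
    ((measurable_id.pow_const (σ - 1)).aestronglyMeasurable.mul hf.norm) ?_
  filter_upwards [ae_restrict_mem hS] with r hr
  have hr0 : 0 < r := hS0 hr
  rw [Real.norm_of_nonneg (by positivity), Pi.add_apply]
  linarith [Real.two_mul_rpow_mul_le hr0 ‖f r‖ α σ]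

lemma integrableOn_Ioi_rpow_mul_norm_of_sq_mul_rpow
    (hf : AEStronglyMeasurable f (volume.restrict (Ioi 0)))
    (hα : IntegrableOn (fun r => ‖f r‖ ^ 2 * r ^ (2 * α - 1)) (Ioi 0))
    (hβ : IntegrableOn (fun r => ‖f r‖ ^ 2 * r ^ (2 * β - 1)) (Ioi 0))
    (hασ : α < σ) (hσβ : σ < β) :
    IntegrableOn (fun r => r ^ (σ - 1) * ‖f r‖) (Ioi 0) := by
  rw [← Ioc_union_Ioi_eq_Ioi zero_le_one]
  refine IntegrableOn.union ?_ ?_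
  · exact integrableOn_rpow_mul_norm_of_sq_mul_rpow measurableSet_Ioc Ioc_subset_Ioi_self
      (hf.mono_set Ioc_subset_Ioi_self) (hα.mono_set Ioc_subset_Ioi_self)
      (intervalIntegral.intervalIntegrable_rpow' (by linarith)).1
  · exact integrableOn_rpow_mul_norm_of_sq_mul_rpow measurableSet_Ioi
      (Ioi_subset_Ioi zero_le_one) (hf.mono_set (Ioi_subset_Ioi zero_le_one))
      (hβ.mono_set (Ioi_subset_Ioi zero_le_one))
      (integrableOn_Ioi_rpow_of_lt (by linarith) one_pos)

end WeightedL2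

lemma Complex.norm_ofReal_cpow_mul_log_le {t ε : ℝ} {z s : ℂ} (ht : 0 < t) (hε : 0 < ε)
    (hz : ‖z - s‖ ≤ ε) :
    ‖(t : ℂ) ^ (z - 1) * Real.log t‖ ≤
      2 / ε * (t ^ (s.re - 2 * ε - 1) + t ^ (s.re + 2 * ε - 1)) := by
  rw [norm_mul, norm_cpow_eq_rpow_re_of_pos ht, norm_real, Real.norm_eq_abs, sub_re, one_re]
  have hre : |z.re - 1 - (s.re - 1)| ≤ ε := by
    simpa using (abs_re_le_norm (z - s)).trans hz
  simpa only [sub_right_comm _ (1 : ℝ), add_sub_right_comm _ _ (1 : ℝ)] using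
    Real.rpow_mul_abs_log_le ht hε hre

section Mellin

variable {E : Type*} [NormedAddCommGroup E] [NormedSpace ℂ E] {f : ℝ → E}

theorem mellin_differentiableAt_of_integrableOn
    (hf : AEStronglyMeasurable f (volume.restrict (Ioi 0))) {b c : ℝ}
    (habs : ∀ σ ∈ Ioo b c, IntegrableOn (fun t : ℝ => t ^ (σ - 1) * ‖f t‖) (Ioi 0))
    {s : ℂ} (hs : s.re ∈ Ioo b c) :
    DifferentiableAt ℂ (mellin f) s := by
  set F : ℂ → ℝ → E := fun z t => (t : ℂ) ^ (z - 1) • f t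
  set F' : ℂ → ℝ → E := fun z t => ((t : ℂ) ^ (z - 1) * Real.log t) • f t
  set ε := min (s.re - b) (c - s.re) / 4
  have hε : 0 < ε := by have := hs.1; have := hs.2; positivity
  have hε_le : 4 * ε ≤ min (s.re - b) (c - s.re) := by simp only [ε]; linarith
  have hlow : s.re - 2 * ε ∈ Ioo b c := by
    constructor <;> linarith [min_le_left (s.re - b) (c - s.re), hs.2]
  have hhigh : s.re + 2 * ε ∈ Ioo b c := by
    constructor <;> linarith [min_le_right (s.re - b) (c - s.re), hs.1]
  set bound : ℝ → ℝ := fun t =>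
    2 / ε * (t ^ (s.re - 2 * ε - 1) * ‖f t‖ + t ^ (s.re + 2 * ε - 1) * ‖f t‖)
  have cpow_meas (w : ℂ) : AEStronglyMeasurable (fun t : ℝ => (t : ℂ) ^ w)
      (volume.restrict (Ioi 0)) :=
    (Complex.measurable_ofReal.pow_const w).aestronglyMeasurable
  have hF_meas : ∀ᶠ z in nhds s, AEStronglyMeasurable (F z) (volume.restrict (Ioi 0)) :=
    .of_forall fun z => (cpow_meas (z - 1)).smul hf
  have hF_int : IntegrableOn (F s) (Ioi 0) :=
    (mellin_convergent_iff_norm subset_rfl measurableSet_Ioi hf).2 (habs _ hs)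
  have hF'_meas : AEStronglyMeasurable (F' s) (volume.restrict (Ioi 0)) :=
    ((cpow_meas (s - 1)).mul
      (Complex.measurable_ofReal.comp Real.measurable_log).aestronglyMeasurable).smul hf
  have hF'_le : ∀ᵐ t ∂(volume.restrict (Ioi 0)), ∀ z ∈ Metric.ball s ε, ‖F' z t‖ ≤ bound t := by
    filter_upwards [ae_restrict_mem measurableSet_Ioi] with t (ht : 0 < t) z hz
    rw [norm_smul]
    calc _ ≤ 2 / ε * (t ^ (s.re - 2 * ε - 1) + t ^ (s.re + 2 * ε - 1)) * ‖f t‖ := by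
          gcongr
          exact Complex.norm_ofReal_cpow_mul_log_le ht hε (mem_ball_iff_norm.1 hz).le
      _ = bound t := by ring
  have hbound : IntegrableOn bound (Ioi 0) :=
    ((habs _ hlow).add (habs _ hhigh)).const_mul _
  have hF_deriv : ∀ᵐ t ∂(volume.restrict (Ioi 0)), ∀ z ∈ Metric.ball s ε,
      HasDerivAt (fun w => F w t) (F' z t) z := by
    filter_upwards [ae_restrict_mem measurableSet_Ioi] with t (ht : 0 < t) z _
    have hcpow : HasDerivAt (fun w : ℂ => (t : ℂ) ^ (w - 1))
        ((t : ℂ) ^ (z - 1) * Real.log t) z := by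
      convert ((hasDerivAt_id' z).sub_const 1).const_cpow
        (Or.inl (Complex.ofReal_ne_zero.2 ht.ne')) using 1
      rw [Complex.ofReal_log ht.le, mul_one]
    exact hcpow.smul_const (f t)
  exact (hasDerivAt_integral_of_dominated_loc_of_deriv_le (Metric.ball_mem_nhds s hε)
    hF_meas hF_int hF'_meas hF'_le hbound hF_deriv).2.differentiableAt

end Mellin

theorem stmt_5_general (a : ℝ) (f : ℝ → ℂ) (hf : Measurable f)
    (h0 : IntegrableOn (fun r => ‖f r‖ ^ 2 / r) (Set.Ioi 0))
    (h1 : IntegrableOn (fun r => ‖f r‖ ^ 2 * r ^ (-2 * a - 1)) (Set.Ioi 0)) :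
    (∀ z : ℂ, -a < z.re → z.re < 0 → MellinConvergent f z) ∧
      DifferentiableOn ℂ (mellin f) {z : ℂ | -a < z.re ∧ z.re < 0} := by
  have habs : ∀ σ ∈ Ioo (-a) 0, IntegrableOn (fun r => r ^ (σ - 1) * ‖f r‖) (Ioi 0) :=
    fun σ hσ => integrableOn_Ioi_rpow_mul_norm_of_sq_mul_rpow hf.aestronglyMeasurable
      (by simpa only [mul_neg, neg_mul] using h1)
      (by simpa only [mul_zero, zero_sub, Real.rpow_neg_one, div_eq_mul_inv] using h0) hσ.1 hσ.2
  exact ⟨fun z hz₁ hz₂ => (mellin_convergent_iff_norm subset_rfl measurableSet_Ioi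
      hf.aestronglyMeasurable).2 (habs _ ⟨hz₁, hz₂⟩),
    fun z hz => (mellin_differentiableAt_of_integrableOn hf.aestronglyMeasurable habs
      hz).differentiableWithinAt⟩

/-- If `f` and `f·r^{-a}` lie in `L²((0,∞), dr/r)` with `a > 0`, then the Mellin transform
of `f` converges absolutely and is holomorphic on the strip `-a < Re z < 0`. -/
theorem stmt_5 (a : ℝ) (ha : 0 < a) (f : ℝ → ℂ) (hf : Measurable f)
    (h0 : IntegrableOn (fun r => ‖f r‖ ^ 2 / r) (Set.Ioi 0))
    (h1 : IntegrableOn (fun r => ‖f r‖ ^ 2 * r ^ (-2 * a - 1)) (Set.Ioi 0)) :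
    (∀ z : ℂ, -a < z.re → z.re < 0 → MellinConvergent f z) ∧
      DifferentiableOn ℂ (mellin f) {z : ℂ | -a < z.re ∧ z.re < 0} :=
  stmt_5_general a f hf h0 h1
end

section
/- Let a > 0 and let f : (0,∞) → ℂ be differentiable, and suppose that the four functions f, r ↦ f(r) r^{-a}, r ↦ r f'(r), and r ↦ r f'(r) r^{-a} all lie in L²((0,∞), dr/r). Then for every c ∈ ℂ with -a < Re c < 0, the Mellin transforms of f and of r ↦ r f'(r) at c are given by absolutely convergent integrals and satisfy mellin (r ↦ r f'(r)) c = -c · (mellin f c). -/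
/-!
Substituting `r = exp t` turns the Mellin integrals at `c` into integrals over `ℝ` of
`h t = exp (c t) f (exp t)` and of its derivative `h' t = exp (c t) (exp t f' (exp t) + c f (exp t))`.
When both Mellin integrals converge absolutely, `h` and `h'` are integrable on `ℝ`, so `∫ h' = 0`,
which is the identity. Absolute convergence on the strip `-a < Re c < 0` comes from AM-GM:
`|f| r^(σ-1)` is dominated near `0` by `|f|² r^(-2a-1) + r^(2(σ+a)-1)` and near `∞` by
`|f|²/r + r^(2σ-1)`.
-/

open MeasureTheory Set

section Mellin

variable {E : Type*} [NormedAddCommGroup E] [NormedSpace ℂ E]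

lemma exp_smul_mellin_integrand_exp (f : ℝ → E) (s : ℂ) (t : ℝ) :
    Real.exp t • ((Real.exp t : ℂ) ^ (s - 1) • f (Real.exp t)) =
      Complex.exp (s * t) • f (Real.exp t) := by
  rw [Complex.cpow_def_of_ne_zero (by exact_mod_cast (Real.exp_pos t).ne'),
    ← Complex.ofReal_log (Real.exp_pos t).le, Real.log_exp, ← Complex.coe_smul, smul_smul,
    Complex.ofReal_exp, ← Complex.exp_add]
  ring_nf

lemma mellinConvergent_iff_integrable_comp_exp (f : ℝ → E) (s : ℂ) :
    MellinConvergent f s ↔ Integrable fun t : ℝ => Complex.exp (s * t) • f (Real.exp t) := by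
  have := integrableOn_image_iff_integrableOn_abs_deriv_smul MeasurableSet.univ
    (fun t _ => (Real.hasDerivAt_exp t).hasDerivWithinAt) Real.exp_injective.injOn
    (fun t : ℝ => (t : ℂ) ^ (s - 1) • f t)
  simp only [image_univ, Real.range_exp, integrableOn_univ, Real.abs_exp,
    exp_smul_mellin_integrand_exp] at this
  exact this

lemma mellin_eq_integral_comp_exp (f : ℝ → E) (s : ℂ) :
    mellin f s = ∫ t : ℝ, Complex.exp (s * t) • f (Real.exp t) := by
  have := integral_image_eq_integral_abs_deriv_smul MeasurableSet.univ
    (fun t _ => (Real.hasDerivAt_exp t).hasDerivWithinAt) Real.exp_injective.injOn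
    (fun t : ℝ => (t : ℂ) ^ (s - 1) • f t)
  simp only [image_univ, Real.range_exp, Real.abs_exp, exp_smul_mellin_integrand_exp,
    Measure.restrict_univ] at this
  exact this

theorem mellin_ofReal_smul_deriv {f f' : ℝ → E} {c : ℂ}
    (hf : ∀ r ∈ Ioi (0 : ℝ), HasDerivAt f (f' r) r) (hMf : MellinConvergent f c)
    (hMf' : MellinConvergent (fun r : ℝ => (r : ℂ) • f' r) c) :
    mellin (fun r : ℝ => (r : ℂ) • f' r) c = -c • mellin f c := by
  rw [mellinConvergent_iff_integrable_comp_exp] at hMf hMf'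
  have hderiv : ∀ t : ℝ, HasDerivAt (fun t : ℝ => Complex.exp (c * t) • f (Real.exp t))
      (Complex.exp (c * t) • ((Real.exp t : ℂ) • f' (Real.exp t)) +
        c • Complex.exp (c * t) • f (Real.exp t)) t := by
    intro t
    have hexp : HasDerivAt (fun t : ℝ => Complex.exp (c * t)) (c * Complex.exp (c * t)) t := by
      simpa [mul_comm] using ((hasDerivAt_id (t : ℂ)).const_mul c).cexp.comp_ofReal
    refine (hexp.smul ((hf _ (Real.exp_pos t)).scomp t (Real.hasDerivAt_exp t))).congr_deriv ?_
    rw [Complex.coe_smul, mul_smul, Function.comp_apply]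
  have hMf_smul : Integrable fun t : ℝ => c • Complex.exp (c * t) • f (Real.exp t) := hMf.smul c
  have hzero := integral_eq_zero_of_hasDerivAt_of_integrable hderiv (hMf'.add hMf_smul) hMf
  rw [integral_add hMf' hMf_smul, integral_smul, ← mellin_eq_integral_comp_exp,
    ← mellin_eq_integral_comp_exp (fun r : ℝ => (r : ℂ) • f' r)] at hzero
  rw [neg_smul]
  exact eq_neg_of_add_eq_zero_left hzero

lemma integrableOn_mellin_integrand_of_sq {G : ℝ → E} {s : Set ℝ} {c : ℂ} {u v : ℝ}
    (hs : MeasurableSet s) (hs0 : s ⊆ Ioi 0) (huv : u + v = 2 * (c.re - 1))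
    (hG : AEStronglyMeasurable G (volume.restrict s))
    (hGu : IntegrableOn (fun t => ‖G t‖ ^ 2 * t ^ u) s) (hv : IntegrableOn (fun t => t ^ v) s) :
    IntegrableOn (fun t : ℝ => (t : ℂ) ^ (c - 1) • G t) s := by
  refine ((hGu.add hv).div_const 2).mono'
    ((Complex.measurable_ofReal.pow_const _).aestronglyMeasurable.smul hG) ?_
  filter_upwards [ae_restrict_mem hs] with t ht
  have ht0 : 0 < t := hs0 ht
  have hsq : ∀ w : ℝ, (t ^ (w / 2)) ^ 2 = t ^ w := fun w => by
    rw [← Real.rpow_mul_natCast ht0.le]; norm_num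
  have hprod : ‖G t‖ * t ^ (u / 2) * t ^ (v / 2) = t ^ (c.re - 1) * ‖G t‖ := by
    rw [mul_assoc, ← Real.rpow_add ht0, ← add_div, huv, mul_div_cancel_left₀ _ two_ne_zero,
      mul_comm]
  rw [norm_smul, Complex.norm_cpow_eq_rpow_re_of_pos ht0, Complex.sub_re, Complex.one_re,
    ← hprod, Pi.add_apply, ← hsq u, ← hsq v]
  nlinarith [two_mul_le_add_sq (‖G t‖ * t ^ (u / 2)) (t ^ (v / 2))]

theorem mellinConvergent_of_integrableOn_sq {G : ℝ → E} {α β : ℝ} {c : ℂ}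
    (hα : α < c.re) (hβ : c.re < β) (hG : AEStronglyMeasurable G (volume.restrict (Ioi 0)))
    (hGα : IntegrableOn (fun t => ‖G t‖ ^ 2 * t ^ (2 * α - 1)) (Ioi 0))
    (hGβ : IntegrableOn (fun t => ‖G t‖ ^ 2 * t ^ (2 * β - 1)) (Ioi 0)) :
    MellinConvergent G c := by
  have h_bot : IntegrableOn (fun t : ℝ => (t : ℂ) ^ (c - 1) • G t) (Ioc 0 1) := by
    refine integrableOn_mellin_integrand_of_sq measurableSet_Ioc Ioc_subset_Ioi_self
      (v := 2 * (c.re - α) - 1) (by ring) (hG.mono_set Ioc_subset_Ioi_self)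
      (hGα.mono_set Ioc_subset_Ioi_self) ?_
    exact (intervalIntegral.integrableOn_Ioo_rpow_iff zero_lt_one).2 (by linarith)
      |>.congr_set_ae Ioo_ae_eq_Ioc.symm
  have h_top : IntegrableOn (fun t : ℝ => (t : ℂ) ^ (c - 1) • G t) (Ioi 1) := by
    refine integrableOn_mellin_integrand_of_sq measurableSet_Ioi (Ioi_subset_Ioi zero_le_one)
      (v := 2 * (c.re - β) - 1) (by ring) (hG.mono_set (Ioi_subset_Ioi zero_le_one))
      (hGβ.mono_set (Ioi_subset_Ioi zero_le_one)) ?_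
    exact integrableOn_Ioi_rpow_of_lt (by linarith) zero_lt_one
  rw [MellinConvergent, ← Ioc_union_Ioi_eq_Ioi zero_le_one]
  exact h_bot.union h_top

end Mellin

theorem aestronglyMeasurable_restrict_of_hasDerivAt {F : Type*} [NormedAddCommGroup F]
    [NormedSpace ℝ F] [CompleteSpace F] {f f' : ℝ → F} {s : Set ℝ} (hs : MeasurableSet s)
    (h : ∀ x ∈ s, HasDerivAt f (f' x) x) : AEStronglyMeasurable f' (volume.restrict s) :=
  (stronglyMeasurable_deriv f).aestronglyMeasurable.congr <|
    (ae_restrict_iff' hs).2 <| Filter.Eventually.of_forall fun x hx => (h x hx).deriv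

theorem stmt_7_general (a : ℝ) (f f' : ℝ → ℂ)
    (hdiff : ∀ r ∈ Set.Ioi (0 : ℝ), HasDerivAt f (f' r) r)
    (h1 : IntegrableOn (fun r => ‖f r‖ ^ 2 / r) (Set.Ioi 0))
    (h2 : IntegrableOn (fun r => ‖f r‖ ^ 2 * r ^ (-2 * a - 1)) (Set.Ioi 0))
    (h3 : IntegrableOn (fun (r : ℝ) => ‖(r : ℂ) * f' r‖ ^ 2 / r) (Set.Ioi 0))
    (h4 : IntegrableOn (fun (r : ℝ) => ‖(r : ℂ) * f' r‖ ^ 2 * r ^ (-2 * a - 1)) (Set.Ioi 0)) :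
    ∀ c : ℂ, -a < c.re → c.re < 0 →
      MellinConvergent f c ∧ MellinConvergent (fun r => (r : ℂ) * f' r) c ∧
        mellin (fun r => (r : ℂ) * f' r) c = -c * mellin f c := by
  intro c hc_lo hc_hi
  have hf_meas : AEStronglyMeasurable f (volume.restrict (Ioi 0)) :=
    ContinuousOn.aestronglyMeasurable (fun r hr => (hdiff r hr).continuousAt.continuousWithinAt)
      measurableSet_Ioi
  have hg_meas : AEStronglyMeasurable (fun r : ℝ => (r : ℂ) * f' r) (volume.restrict (Ioi 0)) :=
    Complex.continuous_ofReal.aestronglyMeasurable.mul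
      (aestronglyMeasurable_restrict_of_hasDerivAt measurableSet_Ioi hdiff)
  have hMf : MellinConvergent f c :=
    mellinConvergent_of_integrableOn_sq hc_lo hc_hi hf_meas (by convert h2 using 4; ring)
      (by simpa [div_eq_mul_inv, Real.rpow_neg_one] using h1)
  have hMg : MellinConvergent (fun r : ℝ => (r : ℂ) * f' r) c :=
    mellinConvergent_of_integrableOn_sq hc_lo hc_hi hg_meas (by convert h4 using 4; ring)
      (by simpa [div_eq_mul_inv, Real.rpow_neg_one] using h3)
  exact ⟨hMf, hMg, mellin_ofReal_smul_deriv hdiff hMf hMg⟩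

/-- The Mellin transform intertwines the Euler operator `r∂_r` with multiplication by `-c`
on the strip `-a < Re c < 0`: if `f`, `f·r^{-a}`, `r f'` and `(r f')·r^{-a}` belong to
`L²((0,∞), dr/r)`, then `mellin (r ↦ r f'(r)) c = -c · mellin f c`. -/
theorem stmt_7 (a : ℝ) (ha : 0 < a) (f f' : ℝ → ℂ)
    (hdiff : ∀ r ∈ Set.Ioi (0 : ℝ), HasDerivAt f (f' r) r)
    (h1 : IntegrableOn (fun r => ‖f r‖ ^ 2 / r) (Set.Ioi 0))
    (h2 : IntegrableOn (fun r => ‖f r‖ ^ 2 * r ^ (-2 * a - 1)) (Set.Ioi 0))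
    (h3 : IntegrableOn (fun (r : ℝ) => ‖(r : ℂ) * f' r‖ ^ 2 / r) (Set.Ioi 0))
    (h4 : IntegrableOn (fun (r : ℝ) => ‖(r : ℂ) * f' r‖ ^ 2 * r ^ (-2 * a - 1)) (Set.Ioi 0)) :
    ∀ c : ℂ, -a < c.re → c.re < 0 →
      MellinConvergent f c ∧ MellinConvergent (fun r => (r : ℂ) * f' r) c ∧
        mellin (fun r => (r : ℂ) * f' r) c = -c * mellin f c :=
  stmt_7_general a f f' hdiff h1 h2 h3 h4
end

section
/- Let β ∈ ℝ and ε > 0, and let f : (0,∞) → ℂ be measurable with ∫₀^∞ |f(r)|² r^{2(β+ε)} dr/r < ∞ and ∫₀^∞ |f(r)|² r^{2(β-ε)} dr/r < ∞. Then for every c ∈ ℂ with Re c = β, the Mellin integral ∫₀^∞ f(r) r^c dr/r converges absolutely and |mellin f c| ≤ (2ε)^{-1/2} ( ‖f·r^{β-ε}‖ + ‖f·r^{β+ε}‖ ), where ‖f·r^σ‖ = (∫₀^∞ |f(r)|² r^{2σ} dr/r)^{1/2}. -/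
/-!
Split `(0, ∞)` at `1` and bound `∫ |f(r)| r^(β-1)` on each piece by Cauchy–Schwarz, writing
`r^(β-1) = r^(β∓ε-1/2) · r^(±ε-1/2)`: the first factor pairs with `f` into the weighted
`L²(dr/r)` norm, and the square of the second, `r^(2ε-1)` on `(0, 1]` resp. `r^(-2ε-1)`
on `(1, ∞)`, integrates to exactly `1/(2ε)`.
-/

open MeasureTheory Set

theorem integral_mul_le_sqrt_mul_sqrt_of_nonneg {α : Type*} [MeasurableSpace α] {μ : Measure α}
    {g w : α → ℝ} (hg0 : 0 ≤ᵐ[μ] g) (hw0 : 0 ≤ᵐ[μ] w) (hg : MemLp g 2 μ) (hw : MemLp w 2 μ) :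
    ∫ a, g a * w a ∂μ ≤ √(∫ a, g a ^ 2 ∂μ) * √(∫ a, w a ^ 2 ∂μ) := by
  have h := integral_mul_le_Lp_mul_Lq_of_nonneg Real.HolderConjugate.two_two hg0 hw0
    (by rwa [ENNReal.ofReal_ofNat]) (by rwa [ENNReal.ofReal_ofNat])
  simpa only [Real.rpow_two, ← Real.sqrt_eq_rpow] using h

theorem rpow_sub_half_sq {r : ℝ} (hr : 0 ≤ r) (σ : ℝ) :
    (r ^ (σ - 1 / 2)) ^ 2 = r ^ (2 * σ - 1) := by
  rw [← Real.rpow_natCast, ← Real.rpow_mul hr]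
  ring_nf

theorem integral_Ioc_zero_one_rpow {a : ℝ} (ha : -1 < a) :
    ∫ r in Ioc 0 1, r ^ a = (a + 1)⁻¹ := by
  rw [← intervalIntegral.integral_of_le zero_le_one, integral_rpow (Or.inl ha), Real.one_rpow,
    Real.zero_rpow (by linarith), sub_zero, one_div]

theorem sqrt_inv_eq_rpow_neg_half {x : ℝ} (hx : 0 ≤ x) : √x⁻¹ = x ^ (-(1 / 2 : ℝ)) := by
  rw [Real.sqrt_eq_rpow, Real.inv_rpow hx, Real.rpow_neg hx]

section WeightedNorm

variable {E : Type*} [NormedAddCommGroup E] {f : ℝ → E}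

theorem integrableOn_norm_mul_rpow_and_integral_le {s : Set ℝ} (hs : MeasurableSet s)
    (hs0 : s ⊆ Ioi 0) (hf : AEStronglyMeasurable f (volume.restrict s)) {σ τ : ℝ}
    (hfσ : IntegrableOn (fun r => ‖f r‖ ^ 2 * r ^ (2 * σ - 1)) s)
    (hτ : IntegrableOn (fun r => r ^ (2 * τ - 1)) s) :
    IntegrableOn (fun r => ‖f r‖ * r ^ (σ + τ - 1)) s ∧
      ∫ r in s, ‖f r‖ * r ^ (σ + τ - 1) ≤
        √(∫ r in s, ‖f r‖ ^ 2 * r ^ (2 * σ - 1)) * √(∫ r in s, r ^ (2 * τ - 1)) := by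
  set g : ℝ → ℝ := fun r => ‖f r‖ * r ^ (σ - 1 / 2)
  set w : ℝ → ℝ := fun r => r ^ (τ - 1 / 2)
  have hpos : ∀ᵐ r ∂volume.restrict s, 0 < r := (ae_restrict_mem hs).mono hs0
  have hgw : (fun r => g r * w r) =ᵐ[volume.restrict s] fun r => ‖f r‖ * r ^ (σ + τ - 1) := by
    filter_upwards [hpos] with r hr
    rw [mul_assoc, ← Real.rpow_add hr]
    ring_nf
  have hg2 : (fun r => g r ^ 2) =ᵐ[volume.restrict s] fun r => ‖f r‖ ^ 2 * r ^ (2 * σ - 1) := by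
    filter_upwards [hpos] with r hr
    rw [mul_pow, rpow_sub_half_sq hr.le]
  have hw2 : (fun r => w r ^ 2) =ᵐ[volume.restrict s] fun r => r ^ (2 * τ - 1) := by
    filter_upwards [hpos] with r hr
    exact rpow_sub_half_sq hr.le τ
  have hgL2 : MemLp g 2 (volume.restrict s) :=
    (memLp_two_iff_integrable_sq (hf.norm.mul (measurable_id.pow_const _).aestronglyMeasurable)).2
      (hfσ.congr hg2.symm)
  have hwL2 : MemLp w 2 (volume.restrict s) :=
    (memLp_two_iff_integrable_sq (measurable_id.pow_const _).aestronglyMeasurable).2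
      (hτ.congr hw2.symm)
  refine ⟨(hgL2.integrable_mul hwL2).congr hgw, ?_⟩
  have hg0 : 0 ≤ᵐ[volume.restrict s] g := hpos.mono fun r hr => by positivity
  have hw0 : 0 ≤ᵐ[volume.restrict s] w := hpos.mono fun r hr => by positivity
  calc ∫ r in s, ‖f r‖ * r ^ (σ + τ - 1) = ∫ r in s, g r * w r := (integral_congr_ae hgw).symm
    _ ≤ √(∫ r in s, g r ^ 2) * √(∫ r in s, w r ^ 2) :=
      integral_mul_le_sqrt_mul_sqrt_of_nonneg hg0 hw0 hgL2 hwL2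
    _ = _ := by rw [integral_congr_ae hg2, integral_congr_ae hw2]

theorem setIntegral_norm_sq_mul_rpow_le {s : Set ℝ} (hs0 : s ⊆ Ioi 0) {a : ℝ}
    (h : IntegrableOn (fun r => ‖f r‖ ^ 2 * r ^ a) (Ioi 0)) :
    ∫ r in s, ‖f r‖ ^ 2 * r ^ a ≤ ∫ r in Ioi 0, ‖f r‖ ^ 2 * r ^ a := by
  refine setIntegral_mono_set h ?_ hs0.eventuallyLE
  filter_upwards [ae_restrict_mem measurableSet_Ioi] with r (hr : 0 < r)
  positivity

theorem norm_mellin_le_integral_norm_mul_rpow [NormedSpace ℂ E] (z : ℂ) :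
    ‖mellin f z‖ ≤ ∫ r in Ioi 0, ‖f r‖ * r ^ (z.re - 1) := by
  refine (norm_integral_le_integral_norm _).trans_eq (setIntegral_congr_fun measurableSet_Ioi ?_)
  intro r (hr : 0 < r)
  dsimp only
  rw [norm_smul, Complex.norm_cpow_eq_rpow_re_of_pos hr, Complex.sub_re, Complex.one_re, mul_comm]

theorem integral_Ioc_zero_one_norm_mul_rpow_le
    (hf : AEStronglyMeasurable f (volume.restrict (Ioi 0))) {β ε : ℝ} (hε : 0 < ε)
    (h : IntegrableOn (fun r => ‖f r‖ ^ 2 * r ^ (2 * (β - ε) - 1)) (Ioi 0)) :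
    IntegrableOn (fun r => ‖f r‖ * r ^ (β - 1)) (Ioc 0 1) ∧
      ∫ r in Ioc 0 1, ‖f r‖ * r ^ (β - 1) ≤
        (2 * ε) ^ (-(1 / 2 : ℝ)) * √(∫ r in Ioi 0, ‖f r‖ ^ 2 * r ^ (2 * (β - ε) - 1)) := by
  have hweight : IntegrableOn (fun r : ℝ => r ^ (2 * ε - 1)) (Ioc 0 1) := by
    rw [← intervalIntegrable_iff_integrableOn_Ioc_of_le zero_le_one]
    exact intervalIntegral.intervalIntegrable_rpow' (by linarith)
  obtain ⟨hint, hle⟩ := integrableOn_norm_mul_rpow_and_integral_le measurableSet_Ioc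
    Ioc_subset_Ioi_self (hf.mono_set Ioc_subset_Ioi_self) (h.mono_set Ioc_subset_Ioi_self) hweight
  rw [sub_add_cancel] at hint hle
  refine ⟨hint, hle.trans ?_⟩
  rw [integral_Ioc_zero_one_rpow (by linarith), sub_add_cancel,
    sqrt_inv_eq_rpow_neg_half (by positivity), mul_comm]
  gcongr _ * √?_
  exact setIntegral_norm_sq_mul_rpow_le Ioc_subset_Ioi_self h

theorem integral_Ioi_one_norm_mul_rpow_le
    (hf : AEStronglyMeasurable f (volume.restrict (Ioi 0))) {β ε : ℝ} (hε : 0 < ε)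
    (h : IntegrableOn (fun r => ‖f r‖ ^ 2 * r ^ (2 * (β + ε) - 1)) (Ioi 0)) :
    IntegrableOn (fun r => ‖f r‖ * r ^ (β - 1)) (Ioi 1) ∧
      ∫ r in Ioi 1, ‖f r‖ * r ^ (β - 1) ≤
        (2 * ε) ^ (-(1 / 2 : ℝ)) * √(∫ r in Ioi 0, ‖f r‖ ^ 2 * r ^ (2 * (β + ε) - 1)) := by
  have hsub : Ioi (1 : ℝ) ⊆ Ioi 0 := Ioi_subset_Ioi zero_le_one
  have hexp : 2 * -ε - 1 < -1 := by linarith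
  obtain ⟨hint, hle⟩ := integrableOn_norm_mul_rpow_and_integral_le measurableSet_Ioi hsub
    (hf.mono_set hsub) (h.mono_set hsub) (integrableOn_Ioi_rpow_of_lt hexp zero_lt_one)
  rw [add_neg_cancel_right] at hint hle
  refine ⟨hint, hle.trans ?_⟩
  have hweight : ∫ r in Ioi (1 : ℝ), r ^ (2 * -ε - 1) = (2 * ε)⁻¹ := by
    rw [integral_Ioi_rpow_of_lt hexp zero_lt_one, Real.one_rpow]
    field_simp
    ring
  rw [hweight, sqrt_inv_eq_rpow_neg_half (by positivity), mul_comm]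
  gcongr _ * √?_
  exact setIntegral_norm_sq_mul_rpow_le hsub h

end WeightedNorm

/-- Pointwise bound for the Mellin transform on the vertical line `Re c = β` in terms of
nearby weighted `L²(dr/r)` norms:
`|mellin f c| ≤ (2ε)^{-1/2} (‖f·r^{β-ε}‖ + ‖f·r^{β+ε}‖)`. -/
theorem stmt_9 (β ε : ℝ) (hε : 0 < ε) (f : ℝ → ℂ) (hf : Measurable f)
    (h1 : IntegrableOn (fun r => ‖f r‖ ^ 2 * r ^ (2 * (β + ε) - 1)) (Set.Ioi 0))
    (h2 : IntegrableOn (fun r => ‖f r‖ ^ 2 * r ^ (2 * (β - ε) - 1)) (Set.Ioi 0)) :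
    ∀ c : ℂ, c.re = β →
      MellinConvergent f c ∧
        ‖mellin f c‖ ≤ (2 * ε) ^ (-(1 / 2 : ℝ)) *
          (Real.sqrt (∫ r in Set.Ioi (0 : ℝ), ‖f r‖ ^ 2 * r ^ (2 * (β - ε) - 1)) +
            Real.sqrt (∫ r in Set.Ioi (0 : ℝ), ‖f r‖ ^ 2 * r ^ (2 * (β + ε) - 1))) := by
  rintro c rfl
  have hfm := hf.aestronglyMeasurable (μ := volume.restrict (Ioi 0))
  obtain ⟨hint₀, hle₀⟩ := integral_Ioc_zero_one_norm_mul_rpow_le hfm hε h2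
  obtain ⟨hint₁, hle₁⟩ := integral_Ioi_one_norm_mul_rpow_le hfm hε h1
  have hunion : Ioc (0 : ℝ) 1 ∪ Ioi 1 = Ioi 0 := Ioc_union_Ioi_eq_Ioi zero_le_one
  have hint : IntegrableOn (fun r => ‖f r‖ * r ^ (c.re - 1)) (Ioi 0) :=
    hunion ▸ hint₀.union hint₁
  refine ⟨(mellin_convergent_iff_norm subset_rfl measurableSet_Ioi hfm).2 ?_, ?_⟩
  · simpa only [mul_comm] using hint
  calc ‖mellin f c‖ ≤ ∫ r in Ioi 0, ‖f r‖ * r ^ (c.re - 1) :=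
        norm_mellin_le_integral_norm_mul_rpow c
    _ = (∫ r in Ioc 0 1, ‖f r‖ * r ^ (c.re - 1)) + ∫ r in Ioi 1, ‖f r‖ * r ^ (c.re - 1) := by
      rw [← setIntegral_union (Ioc_disjoint_Ioi le_rfl) measurableSet_Ioi hint₀ hint₁, hunion]
    _ ≤ _ := by rw [mul_add]; exact add_le_add hle₀ hle₁
end

section
/- Let m > 0 and ε > 0. Let f : (0,∞) → ℂ be differentiable with ∫₀^∞ |f(r)|² dr/r < ∞ and ∫₀^∞ |f(r)|² r^{-2m} dr/r < ∞, and set g(r) = m f(r) - r f'(r). Assume ∫₀^∞ |g(r)|² dr/r < ∞ and ∫₀^∞ |g(r)|² r^{-2(m+ε)} dr/r < ∞. Then the integral ∫₀^∞ g(r) r^{-m} dr/r converges absolutely and equals 0. -/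
/-!
Put `F r = r^{-m} f r`. Then `F' = -r^{-m-1} g`, so the Mellin integrand of `g` at `-m` is `-F'`.
Near `0` write `r^{-m-1} |g| = (|g| r^{-(m+ε)-1/2}) · r^{ε-1/2}` and near `∞` write
`r^{-m-1} |g| = (|g| r^{-1/2}) · r^{-m-1/2}`: both are products of two functions in `L²(dr)`,
so `F'` is integrable on `(0, ∞)` and `F` has limits at `0⁺` and at `∞`. Both limits vanish,
since `|F|² = |f|² r^{-2m}` is integrable for `dr/r`, a measure that is infinite near either end.
Hence `mellin g (-m) = F(0⁺) - F(∞) = 0`.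
-/

open MeasureTheory Set Filter Topology

theorem not_integrableAtFilter_inv_atTop : ¬ IntegrableAtFilter (fun r : ℝ => r⁻¹) atTop := by
  rintro ⟨s, hs, hint⟩
  obtain ⟨a, ha⟩ := mem_atTop_sets.mp hs
  exact not_integrableOn_Ici_inv (hint.mono_set fun x hx => ha x hx)

theorem not_integrableAtFilter_inv_nhdsGT_zero :
    ¬ IntegrableAtFilter (fun r : ℝ => r⁻¹) (𝓝[>] 0) := by
  rintro ⟨s, hs, hint⟩
  obtain ⟨δ, hδ, hsub⟩ := (nhdsGT_basis (0 : ℝ)).mem_iff.mp hs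
  have hδint : IntervalIntegrable (fun r : ℝ => r⁻¹) volume 0 δ :=
    (intervalIntegrable_iff_integrableOn_Ioo_of_le hδ.le).2 (hint.mono_set hsub)
  simp [hδ.ne, hδ.le] at hδint

theorem eq_zero_of_tendsto_of_integrableOn_norm_sq_div {E : Type*} [NormedAddCommGroup E]
    {l : Filter ℝ} (hl : ¬ IntegrableAtFilter (fun r : ℝ => r⁻¹) l) (hl0 : Ioi 0 ∈ l)
    {F : ℝ → E} (hFc : ContinuousOn F (Ioi 0)) {L : E} (hF : Tendsto F l (𝓝 L))
    (hint : IntegrableOn (fun r => ‖F r‖ ^ 2 / r) (Ioi 0)) : L = 0 := by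
  by_contra hL
  set v := Ioi 0 ∩ F ⁻¹' {x | ‖L‖ / 2 < ‖x‖}
  have hv : IsOpen v :=
    hFc.isOpen_inter_preimage isOpen_Ioi (isOpen_lt continuous_const continuous_norm)
  have hvl : v ∈ l :=
    inter_mem hl0 (hF.norm.eventually (eventually_gt_nhds (half_lt_self (norm_pos_iff.2 hL))))
  set c := (‖L‖ / 2) ^ 2
  have hcinv : IntegrableOn (fun r : ℝ => c * r⁻¹) v := by
    refine (hint.mono_set inter_subset_left).mono'
      (measurable_inv.const_mul c).aestronglyMeasurable ?_
    filter_upwards [ae_restrict_mem hv.measurableSet] with r ⟨hr0, hFr⟩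
    have hr : 0 < r := hr0
    rw [Real.norm_of_nonneg (by positivity), div_eq_mul_inv]
    gcongr
    exact pow_le_pow_left₀ (by positivity) (le_of_lt hFr) 2
  refine hl ⟨v, hvl, ?_⟩
  simpa [IntegrableOn, ← mul_assoc, c, hL] using hcinv.const_mul c⁻¹

section Calculus

variable {E : Type*} [NormedAddCommGroup E] [NormedSpace ℝ E] [CompleteSpace E]
  {F F' : ℝ → E} {a b : ℝ}

theorem aestronglyMeasurable_of_hasDerivAt {s : Set ℝ} (hs : MeasurableSet s)
    (hderiv : ∀ x ∈ s, HasDerivAt F (F' x) x) : AEStronglyMeasurable F' (volume.restrict s) :=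
  (aestronglyMeasurable_deriv F _).congr <|
    (ae_restrict_iff' hs).2 (ae_of_all _ fun x hx => (hderiv x hx).deriv)

theorem tendsto_nhdsGT_of_hasDerivAt_of_integrableOn (hab : a < b)
    (hderiv : ∀ x ∈ Ioc a b, HasDerivAt F (F' x) x) (hint : IntegrableOn F' (Ioc a b)) :
    Tendsto F (𝓝[>] a) (𝓝 (F b - ∫ x in a..b, F' x)) := by
  have hprim : ContinuousOn (fun t => ∫ x in t..b, F' x) (Icc a b) := by
    rw [← uIcc_of_le hab.le]
    refine intervalIntegral.continuousOn_primitive_interval_left ?_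
    rwa [uIcc_of_le hab.le, integrableOn_Icc_iff_integrableOn_Ioc]
  have hlim : Tendsto (fun t => F b - ∫ x in t..b, F' x) (𝓝[>] a)
      (𝓝 (F b - ∫ x in a..b, F' x)) := by
    rw [← nhdsWithin_Ioo_eq_nhdsGT hab]
    exact tendsto_const_nhds.sub ((hprim a (left_mem_Icc.2 hab.le)).mono Ioo_subset_Icc_self)
  refine hlim.congr' ?_
  filter_upwards [Ioo_mem_nhdsGT hab] with t ht
  rw [intervalIntegral.integral_eq_sub_of_hasDerivAt (fun x hx => hderiv x ?_)
    ((intervalIntegrable_iff_integrableOn_Ioc_of_le ht.2.le).2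
      (hint.mono_set (Ioc_subset_Ioc_left ht.1.le))), sub_sub_cancel]
  rw [uIcc_of_le ht.2.le] at hx
  exact ⟨ht.1.trans_le hx.1, hx.2⟩

theorem integral_Ioi_of_hasDerivAt_of_tendsto_nhdsGT {A B : E}
    (hderiv : ∀ x ∈ Ioi a, HasDerivAt F (F' x) x) (hint : IntegrableOn F' (Ioi a))
    (ha : Tendsto F (𝓝[>] a) (𝓝 A)) (htop : Tendsto F atTop (𝓝 B)) :
    ∫ x in Ioi a, F' x = B - A := by
  have hderiv' : ∀ x ∈ Ioi a, HasDerivAt (Function.update F a A) (F' x) x := fun x hx =>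
    (hderiv x hx).congr_of_eventuallyEq <| by
      filter_upwards [Ioi_mem_nhds hx] with y hy using Function.update_of_ne hy.ne' _ _
  have htop' : Tendsto (Function.update F a A) atTop (𝓝 B) :=
    htop.congr' <| by
      filter_upwards [Ioi_mem_atTop a] with y hy using (Function.update_of_ne hy.ne' _ _).symm
  have hcont : ContinuousWithinAt (Function.update F a A) (Ici a) a := by
    rwa [← continuousWithinAt_Ioi_iff_Ici, continuousWithinAt_update_same,
      sdiff_singleton_eq_self self_notMem_Ioi]
  simpa using integral_Ioi_of_hasDerivAt_of_tendsto hcont hderiv' hint htop'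

theorem integral_Ioi_zero_eq_zero_of_hasDerivAt
    (hderiv : ∀ x ∈ Ioi 0, HasDerivAt F (F' x) x) (hint : IntegrableOn F' (Ioi 0))
    (hF : IntegrableOn (fun r => ‖F r‖ ^ 2 / r) (Ioi 0)) : ∫ x in Ioi 0, F' x = 0 := by
  have hFc : ContinuousOn F (Ioi 0) := fun x hx => (hderiv x hx).continuousAt.continuousWithinAt
  have h0 := tendsto_nhdsGT_of_hasDerivAt_of_integrableOn zero_lt_one
    (fun x hx => hderiv x hx.1) (hint.mono_set Ioc_subset_Ioi_self)
  have htop := tendsto_limUnder_of_hasDerivAt_of_integrableOn_Ioi hderiv hint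
  rw [integral_Ioi_of_hasDerivAt_of_tendsto_nhdsGT hderiv hint h0 htop,
    eq_zero_of_tendsto_of_integrableOn_norm_sq_div not_integrableAtFilter_inv_nhdsGT_zero
      self_mem_nhdsWithin hFc h0 hF,
    eq_zero_of_tendsto_of_integrableOn_norm_sq_div not_integrableAtFilter_inv_atTop
      (Ioi_mem_atTop 0) hFc htop hF, sub_zero]

end Calculus

theorem MeasureTheory.Integrable.sqrt_mul_sqrt {α : Type*} [MeasurableSpace α] {μ : Measure α}
    {u v : α → ℝ} (hu : Integrable u μ) (hv : Integrable v μ) :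
    Integrable (fun x => √(u x) * √(v x)) μ := by
  refine ((hu.abs.add hv.abs).div_const 2).mono'
    ((Real.continuous_sqrt.comp_aestronglyMeasurable hu.1).mul
      (Real.continuous_sqrt.comp_aestronglyMeasurable hv.1)) (ae_of_all _ fun x => ?_)
  have hsu := Real.sqrt_le_sqrt (le_abs_self (u x))
  have hsv := Real.sqrt_le_sqrt (le_abs_self (v x))
  rw [Real.norm_of_nonneg (by positivity), Pi.add_apply]
  nlinarith [sq_nonneg (√|u x| - √|v x|), Real.sq_sqrt (abs_nonneg (u x)),
    Real.sq_sqrt (abs_nonneg (v x)), Real.sqrt_nonneg (u x), Real.sqrt_nonneg (v x)]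

theorem integrableOn_norm_mul_rpow_of_integrableOn_sq {E : Type*} [NormedAddCommGroup E]
    {s : Set ℝ} (hs : MeasurableSet s) (hs0 : s ⊆ Ioi 0) {g : ℝ → E} {p q e : ℝ}
    (hpq : p + q = 2 * e) (hg : IntegrableOn (fun r => ‖g r‖ ^ 2 * r ^ p) s)
    (hq : IntegrableOn (fun r : ℝ => r ^ q) s) :
    IntegrableOn (fun r => ‖g r‖ * r ^ e) s := by
  refine IntegrableOn.congr_fun (hg.sqrt_mul_sqrt hq) (fun r hr => ?_) hs
  have hr : 0 < r := hs0 hr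
  rw [Real.sqrt_mul (by positivity), Real.sqrt_sq (norm_nonneg _), Real.sqrt_eq_rpow,
    Real.sqrt_eq_rpow, ← Real.rpow_mul hr.le, ← Real.rpow_mul hr.le, mul_assoc,
    ← Real.rpow_add hr]
  congr 2
  linarith

theorem mellinConvergent_neg_of_integrableOn_sq {E : Type*} [NormedAddCommGroup E]
    [NormedSpace ℂ E] {m ε : ℝ} (hm : 0 < m) (hε : 0 < ε) {g : ℝ → E}
    (hgm : AEStronglyMeasurable g (volume.restrict (Ioi 0)))
    (hg1 : IntegrableOn (fun r => ‖g r‖ ^ 2 / r) (Ioi 0))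
    (hg2 : IntegrableOn (fun r => ‖g r‖ ^ 2 * r ^ (-2 * (m + ε) - 1)) (Ioi 0)) :
    MellinConvergent g (-(m : ℂ)) := by
  have hg1' : IntegrableOn (fun r => ‖g r‖ ^ 2 * r ^ (-1 : ℝ)) (Ioi 1) :=
    (hg1.mono_set (Ioi_subset_Ioi zero_le_one)).congr_fun
      (fun r _ => by rw [Real.rpow_neg_one]; exact div_eq_mul_inv _ _) measurableSet_Ioi
  have hnear0 : IntegrableOn (fun r : ℝ => r ^ (2 * ε - 1)) (Ioc 0 1) := by
    rw [integrableOn_Ioc_iff_integrableOn_Ioo]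
    exact (intervalIntegral.integrableOn_Ioo_rpow_iff zero_lt_one).mpr (by linarith)
  have hnorm : IntegrableOn (fun r => ‖g r‖ * r ^ (-m - 1)) (Ioi 0) := by
    rw [← Ioc_union_Ioi_eq_Ioi zero_le_one]
    exact (integrableOn_norm_mul_rpow_of_integrableOn_sq measurableSet_Ioc Ioc_subset_Ioi_self
        (q := 2 * ε - 1) (by ring) (hg2.mono_set Ioc_subset_Ioi_self) hnear0).union
      (integrableOn_norm_mul_rpow_of_integrableOn_sq measurableSet_Ioi
        (Ioi_subset_Ioi zero_le_one) (q := -2 * m - 1) (by ring) hg1'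
        (integrableOn_Ioi_rpow_of_lt (by linarith) zero_lt_one))
  have hpow : ContinuousOn (fun r : ℝ => (r : ℂ) ^ (-(m : ℂ) - 1)) (Ioi 0) := fun r hr =>
    (Complex.continuousAt_ofReal_cpow_const _ _ (Or.inr (ne_of_gt hr))).continuousWithinAt
  refine hnorm.mono' ((hpow.aestronglyMeasurable measurableSet_Ioi).smul hgm) ?_
  filter_upwards [ae_restrict_mem measurableSet_Ioi] with r hr
  rw [norm_smul, Complex.norm_cpow_eq_rpow_re_of_pos hr, mul_comm]
  simp

theorem HasDerivAt.ofReal_cpow_const_mul {f : ℝ → ℂ} {f' : ℂ} {r : ℝ} (hf : HasDerivAt f f' r)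
    (hr : 0 < r) (s : ℂ) :
    HasDerivAt (fun x : ℝ => (x : ℂ) ^ s * f x) ((r : ℂ) ^ (s - 1) * (s * f r + r * f')) r := by
  have hpow : HasDerivAt (fun x : ℝ => (x : ℂ) ^ s) (s * (r : ℂ) ^ (s - 1)) r :=
    (Complex.hasStrictDerivAt_cpow_const (Complex.ofReal_mem_slitPlane.2 hr)).hasDerivAt.comp_ofReal
  have hr' : (r : ℂ) ≠ 0 := Complex.ofReal_ne_zero.2 hr.ne'
  refine (hpow.mul hf).congr_deriv ?_
  rw [Complex.cpow_sub _ _ hr', Complex.cpow_one]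
  field_simp

theorem stmt_10_general (m ε : ℝ) (hm : 0 < m) (hε : 0 < ε) (f f' : ℝ → ℂ)
    (hdiff : ∀ r ∈ Set.Ioi (0 : ℝ), HasDerivAt f (f' r) r)
    (hf2 : IntegrableOn (fun r => ‖f r‖ ^ 2 * r ^ (-2 * m - 1)) (Set.Ioi 0))
    (g : ℝ → ℂ) (hg : g = fun r => (m : ℂ) * f r - (r : ℂ) * f' r)
    (hg1 : IntegrableOn (fun r => ‖g r‖ ^ 2 / r) (Set.Ioi 0))
    (hg2 : IntegrableOn (fun r => ‖g r‖ ^ 2 * r ^ (-2 * (m + ε) - 1)) (Set.Ioi 0)) :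
    MellinConvergent g (-(m : ℂ)) ∧ mellin g (-(m : ℂ)) = 0 := by
  have hfc : ContinuousOn f (Ioi 0) := fun r hr => (hdiff r hr).continuousAt.continuousWithinAt
  have hgm : AEStronglyMeasurable g (volume.restrict (Ioi 0)) := by
    rw [hg]
    exact ((hfc.aestronglyMeasurable measurableSet_Ioi).const_mul _).sub
      (Complex.continuous_ofReal.aestronglyMeasurable.mul
        (aestronglyMeasurable_of_hasDerivAt measurableSet_Ioi hdiff))
  have hconv := mellinConvergent_neg_of_integrableOn_sq hm hε hgm hg1 hg2
  have hderiv : ∀ r ∈ Ioi (0 : ℝ), HasDerivAt (fun x : ℝ => (x : ℂ) ^ (-(m : ℂ)) * f x)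
      (-((r : ℂ) ^ (-(m : ℂ) - 1) • g r)) r := fun r hr =>
    ((hdiff r hr).ofReal_cpow_const_mul hr _).congr_deriv (by simp only [hg, smul_eq_mul]; ring)
  have hL2 : IntegrableOn (fun r : ℝ => ‖(r : ℂ) ^ (-(m : ℂ)) * f r‖ ^ 2 / r) (Ioi 0) := by
    refine hf2.congr_fun (fun r (hr : 0 < r) => ?_) measurableSet_Ioi
    rw [norm_mul, Complex.norm_cpow_eq_rpow_re_of_pos hr, mul_pow, ← Real.rpow_natCast,
      ← Real.rpow_mul hr.le, div_eq_mul_inv, ← Real.rpow_neg_one, mul_right_comm,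
      ← Real.rpow_add hr, Complex.neg_re, Complex.ofReal_re, Nat.cast_ofNat, mul_comm]
    ring_nf
  refine ⟨hconv, ?_⟩
  simpa [mellin, integral_neg] using integral_Ioi_zero_eq_zero_of_hasDerivAt hderiv hconv.neg hL2

/-- Vanishing of the obstruction: if the twisted cohomological equation
`-r f'(r) + m f(r) = g(r)` has a solution `f` with `f` and `f·r^{-m}` in `L²((0,∞), dr/r)`,
and `g`, `g·r^{-(m+ε)}` are in `L²((0,∞), dr/r)`, then `mellin g (-m)` converges absolutely
and equals `0`. -/
theorem stmt_10 (m ε : ℝ) (hm : 0 < m) (hε : 0 < ε) (f f' : ℝ → ℂ)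
    (hdiff : ∀ r ∈ Set.Ioi (0 : ℝ), HasDerivAt f (f' r) r)
    (hf1 : IntegrableOn (fun r => ‖f r‖ ^ 2 / r) (Set.Ioi 0))
    (hf2 : IntegrableOn (fun r => ‖f r‖ ^ 2 * r ^ (-2 * m - 1)) (Set.Ioi 0))
    (g : ℝ → ℂ) (hg : g = fun r => (m : ℂ) * f r - (r : ℂ) * f' r)
    (hg1 : IntegrableOn (fun r => ‖g r‖ ^ 2 / r) (Set.Ioi 0))
    (hg2 : IntegrableOn (fun r => ‖g r‖ ^ 2 * r ^ (-2 * (m + ε) - 1)) (Set.Ioi 0)) :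
    MellinConvergent g (-(m : ℂ)) ∧ mellin g (-(m : ℂ)) = 0 :=
  stmt_10_general m ε hm hε f f' hdiff hf2 g hg hg1 hg2
end

section
/- Let m ∈ ℝ and let g : (0,∞) → ℂ be differentiable. Assume: (i) for every compact set K ⊂ (0,∞) there exist integrable functions h₁, h₂ : (0,∞) → ℝ with |e^{-ms} g(e^s r)| ≤ h₁(s) and |e^{-ms} e^s r g'(e^s r)| ≤ h₂(s) for all r ∈ K and s > 0; and (ii) for every r > 0, e^{-ms} g(e^s r) → 0 as s → ∞. Then the function f(r) := ∫₀^∞ e^{-ms} g(e^s r) ds is differentiable on (0,∞) and satisfies -r f'(r) + m f(r) = g(r) for all r > 0. -/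
/-!
Write `φ(s, x) = e^{-ms} g(e^s x)`, so that `f(x) = ∫₀^∞ φ(s, x) ds`. The domination hypotheses
let us differentiate under the integral sign, giving `f'(x) = ∫₀^∞ ∂ₓφ(s, x) ds`. Since the
dilation flow moves `x` along `e^s x`, the chain rule gives `x ∂ₓφ = ∂ₛφ + m φ`; integrating this
over `s ∈ (0, ∞)` and using `φ(s, x) → 0` as `s → ∞` turns the right-hand side into
`-φ(0, x) + m f(x) = -g(x) + m f(x)`, which is the equation `-x f'(x) + m f(x) = g(x)`.
Note `∂ₓφ(s, x) = e^{-(m-1)s} g'(e^s x)` is again a twisted orbit, of `g'` with weight `m - 1`.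
-/

open MeasureTheory Set Filter Topology Metric

section TwistedDilate

variable {E : Type*} [NormedAddCommGroup E] [NormedSpace ℝ E]

noncomputable def twistedDilate (m : ℝ) (g : ℝ → E) (s x : ℝ) : E :=
  Real.exp (-m * s) • g (Real.exp s * x)

@[simp]
lemma twistedDilate_zero (m : ℝ) (g : ℝ → E) (x : ℝ) : twistedDilate m g 0 x = g x := by
  simp [twistedDilate]

lemma smul_twistedDilate_sub_one (m : ℝ) (g' : ℝ → E) (s x : ℝ) :
    x • twistedDilate (m - 1) g' s x =
      Real.exp (-m * s) • ((Real.exp s * x) • g' (Real.exp s * x)) := by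
  rw [twistedDilate, smul_smul, smul_smul, show -(m - 1) * s = -m * s + s by ring, Real.exp_add]
  ring_nf

variable {m : ℝ} {g g' : ℝ → E}

lemma continuous_twistedDilate (hg : ContinuousOn g (Ioi 0)) {x : ℝ} (hx : 0 < x) :
    Continuous fun s => twistedDilate m g s x :=
  (by fun_prop : Continuous fun s => Real.exp (-m * s)).smul
    (hg.comp_continuous (by fun_prop) fun s => mem_Ioi.2 (by positivity))

lemma hasDerivAt_twistedDilate_point {s x : ℝ}
    (hg : HasDerivAt g (g' (Real.exp s * x)) (Real.exp s * x)) :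
    HasDerivAt (twistedDilate m g s) (twistedDilate (m - 1) g' s x) x := by
  refine ((hg.scomp x ((hasDerivAt_id x).const_mul (Real.exp s))).const_smul
    (Real.exp (-m * s))).congr_deriv ?_
  rw [twistedDilate, smul_smul, show -(m - 1) * s = -m * s + s by ring, Real.exp_add, mul_one]

lemma hasDerivAt_twistedDilate_time {s x : ℝ}
    (hg : HasDerivAt g (g' (Real.exp s * x)) (Real.exp s * x)) :
    HasDerivAt (fun s => twistedDilate m g s x)
      (x • twistedDilate (m - 1) g' s x - m • twistedDilate m g s x) s := by
  have hexp : HasDerivAt (fun s => Real.exp (-m * s)) (Real.exp (-m * s) * (-m * 1)) s :=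
    ((hasDerivAt_id s).const_mul (-m)).exp
  refine (hexp.smul (hg.scomp s ((Real.hasDerivAt_exp s).mul_const x))).congr_deriv ?_
  rw [smul_twistedDilate_sub_one, twistedDilate, Function.comp_apply]
  module

variable [CompleteSpace E]

lemma hasDerivAt_integral_twistedDilate (hdiff : ∀ y ∈ Ioi (0 : ℝ), HasDerivAt g (g' y) y)
    {r : ℝ} (hr : 0 < r) (hint : IntegrableOn (fun s => twistedDilate m g s r) (Ioi 0))
    {h : ℝ → ℝ} (hh : IntegrableOn h (Ioi 0))
    (hbound : ∀ x ∈ ball r (r / 2), ∀ s ∈ Ioi (0 : ℝ), ‖x • twistedDilate (m - 1) g' s x‖ ≤ h s) :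
    IntegrableOn (fun s => twistedDilate (m - 1) g' s r) (Ioi 0) ∧
      HasDerivAt (fun x => ∫ s in Ioi 0, twistedDilate m g s x)
        (∫ s in Ioi 0, twistedDilate (m - 1) g' s r) r := by
  have hpos : ∀ x ∈ ball r (r / 2), r / 2 < x := fun x hx => by
    rw [Real.ball_eq_Ioo] at hx; linarith [hx.1]
  have hdiff' : ∀ s x, 0 < x → HasDerivAt g (g' (Real.exp s * x)) (Real.exp s * x) :=
    fun s x hx => hdiff _ (mul_pos (Real.exp_pos s) hx)
  have hg : ContinuousOn g (Ioi 0) := fun y hy => (hdiff y hy).continuousAt.continuousWithinAt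
  -- `g'` itself need not be measurable, but it agrees with `deriv g` along the orbit.
  have hmeas : AEStronglyMeasurable (fun s => twistedDilate (m - 1) g' s r)
      (volume.restrict (Ioi 0)) := by
    have horbit : (fun s => twistedDilate (m - 1) g' s r) =
        fun s => Real.exp (-(m - 1) * s) • deriv g (Real.exp s * r) := by
      funext s; rw [twistedDilate, (hdiff' s r hr).deriv]
    rw [horbit]
    exact (by fun_prop : Continuous fun s => Real.exp (-(m - 1) * s)).aestronglyMeasurable.smul
      ((stronglyMeasurable_deriv g).comp_measurable (by fun_prop)).aestronglyMeasurable
  refine hasDerivAt_integral_of_dominated_loc_of_deriv_le (μ := volume.restrict (Ioi 0))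
    (F := fun x s => twistedDilate m g s x) (F' := fun x s => twistedDilate (m - 1) g' s x)
    (bound := fun s => h s / (r / 2))
    (ball_mem_nhds r (half_pos hr))
    ((eventually_gt_nhds hr).mono fun x hx => (continuous_twistedDilate hg hx).aestronglyMeasurable)
    hint hmeas ?_ (hh.div_const _) ?_
  · refine (ae_restrict_iff' measurableSet_Ioi).2 (Eventually.of_forall fun s hs x hx => ?_)
    rw [le_div_iff₀' (half_pos hr)]
    calc r / 2 * ‖twistedDilate (m - 1) g' s x‖ ≤ x * ‖twistedDilate (m - 1) g' s x‖ :=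
          mul_le_mul_of_nonneg_right (hpos x hx).le (norm_nonneg _)
      _ = ‖x • twistedDilate (m - 1) g' s x‖ := by
          rw [norm_smul, Real.norm_of_nonneg (half_pos hr |>.trans (hpos x hx)).le]
      _ ≤ h s := hbound x hx s hs
  · exact Eventually.of_forall fun s x hx =>
      hasDerivAt_twistedDilate_point (hdiff' s x ((half_pos hr).trans (hpos x hx)))

lemma twisted_cohomological_equation_integral_twistedDilate
    (hdiff : ∀ y ∈ Ioi (0 : ℝ), HasDerivAt g (g' y) y) {x : ℝ} (hx : 0 < x)
    (hint : IntegrableOn (fun s => twistedDilate m g s x) (Ioi 0))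
    (hint' : IntegrableOn (fun s => twistedDilate (m - 1) g' s x) (Ioi 0))
    (hlim : Tendsto (fun s => twistedDilate m g s x) atTop (𝓝 0)) :
    -(x • ∫ s in Ioi 0, twistedDilate (m - 1) g' s x) + m • ∫ s in Ioi 0, twistedDilate m g s x
      = g x := by
  have hderiv : IntegrableOn (fun s => x • twistedDilate (m - 1) g' s x) (Ioi 0) :=
    hint'.smul x
  have hgen : IntegrableOn (fun s => m • twistedDilate m g s x) (Ioi 0) := hint.smul m
  have hftc := integral_Ioi_of_hasDerivAt_of_tendsto'
    (fun s _ => hasDerivAt_twistedDilate_time (hdiff _ (mul_pos (Real.exp_pos s) hx)))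
    (hderiv.sub hgen) hlim
  rw [integral_sub hderiv hgen, integral_smul, integral_smul,
    twistedDilate_zero, zero_sub] at hftc
  rw [← neg_neg (g x), ← hftc]
  abel

end TwistedDilate

/-- Under local domination and decay hypotheses, the function
`f(r) = ∫₀^∞ e^{-ms} g(e^s r) ds` is differentiable on `(0,∞)` and solves the twisted
cohomological equation `-r f'(r) + m f(r) = g(r)` pointwise. -/
theorem stmt_14 (m : ℝ) (g g' : ℝ → ℂ)
    (hdiff : ∀ r ∈ Set.Ioi (0 : ℝ), HasDerivAt g (g' r) r)
    (hdom : ∀ K : Set ℝ, K ⊆ Set.Ioi (0 : ℝ) → IsCompact K →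
      ∃ h₁ h₂ : ℝ → ℝ, IntegrableOn h₁ (Set.Ioi 0) ∧ IntegrableOn h₂ (Set.Ioi 0) ∧
        ∀ r ∈ K, ∀ s ∈ Set.Ioi (0 : ℝ),
          ‖Real.exp (-m * s) • g (Real.exp s * r)‖ ≤ h₁ s ∧
          ‖Real.exp (-m * s) • ((Real.exp s * r) • g' (Real.exp s * r))‖ ≤ h₂ s)
    (hlim : ∀ r ∈ Set.Ioi (0 : ℝ),
      Filter.Tendsto (fun s => Real.exp (-m * s) • g (Real.exp s * r))
        Filter.atTop (nhds 0)) :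
    ∀ r ∈ Set.Ioi (0 : ℝ), ∃ d : ℂ,
      HasDerivAt (fun x => ∫ s in Set.Ioi (0 : ℝ), Real.exp (-m * s) • g (Real.exp s * x)) d r ∧
      -(r : ℂ) * d + (m : ℂ) * (∫ s in Set.Ioi (0 : ℝ), Real.exp (-m * s) • g (Real.exp s * r))
        = g r := by
  intro r (hr : 0 < r)
  have hball : closedBall r (r / 2) ⊆ Ioi 0 := by
    rw [Real.closedBall_eq_Icc, Icc_subset_Ioi_iff (by linarith)]
    linarith
  obtain ⟨h₁, h₂, hh₁, hh₂, hbound⟩ := hdom _ hball (isCompact_closedBall r (r / 2))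
  have hrK : r ∈ closedBall r (r / 2) := mem_closedBall_self (by linarith)
  have hint : IntegrableOn (fun s => twistedDilate m g s r) (Ioi 0) :=
    hh₁.mono' (continuous_twistedDilate
        (fun y hy => (hdiff y hy).continuousAt.continuousWithinAt) hr).aestronglyMeasurable
      ((ae_restrict_iff' measurableSet_Ioi).2
        (Eventually.of_forall fun s hs => (hbound r hrK s hs).1))
  obtain ⟨hint', hderiv⟩ := hasDerivAt_integral_twistedDilate hdiff hr hint hh₂
    fun x hx s hs => by
      rw [smul_twistedDilate_sub_one]
      exact (hbound x (ball_subset_closedBall hx) s hs).2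
  refine ⟨_, hderiv, ?_⟩
  have heq := twisted_cohomological_equation_integral_twistedDilate hdiff hr hint hint' (hlim r hr)
  rw [Complex.real_smul, Complex.real_smul] at heq
  rw [neg_mul]
  exact heq
end

section
/- Let m > 0 and a > m. Let g : (0,∞) → ℂ be measurable with ∫₀^∞ |g(r)|² dr/r < ∞, ∫₀^∞ |g(r)|² r^{-2a} dr/r < ∞, ∫₀^∞ |g(u)| u^{-m} du/u < ∞, and suppose the obstruction vanishes: ∫₀^∞ g(u) u^{-m} du/u = 0. Define f(r) = ∫₀^∞ e^{-ms} g(e^s r) ds (absolutely convergent for every r > 0). Then for every real b with -a < b ≤ 0 and b ≠ -m, the function f·r^b lies in L²((0,∞), dr/r) and ‖f·r^b‖ ≤ |m+b|^{-1} ‖g·r^b‖, where ‖h·r^σ‖ = (∫₀^∞ |h(r)|² r^{2σ} dr/r)^{1/2}. -/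
/-!
In the coordinate `r = eᵗ` the measure `dr/r` becomes Lebesgue measure, the weight `r^b` becomes
`e^{bt}`, and `f` becomes `F t = ∫_{s>0} e^{-ms} G (s + t) ds` with `G = g ∘ exp`. Hence `e^{bt} F`
is the correlation of `e^{bu} G` with the kernel `e^{-(m+b)s} 1_{s>0}`, and Young's inequality
`L¹ * L² → L²` (Cauchy–Schwarz, then Tonelli) bounds it by `‖kernel‖₁ = (m+b)⁻¹` when `m + b > 0`.
When `m + b < 0` that kernel is not integrable, but the vanishing obstruction
`∫ e^{-mu} G u du = 0` turns `F` into the backward integral `-∫_{s≤0} e^{-ms} G (s + t) ds`,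
whose kernel `e^{-(m+b)s} 1_{s≤0}` has `L¹` norm `|m+b|⁻¹`.
-/

open MeasureTheory Set Real
open scoped ENNReal

section ExpSubstitution

variable {E : Type*} [NormedAddCommGroup E] [NormedSpace ℝ E]

theorem integral_Ioi_eq_integral_exp_smul (φ : ℝ → E) :
    ∫ r in Ioi 0, φ r = ∫ t, exp t • φ (exp t) := by
  rw [← range_exp, ← image_univ, integral_image_eq_integral_abs_deriv_smul MeasurableSet.univ
    (fun t _ => (hasDerivAt_exp t).hasDerivWithinAt) exp_injective.injOn φ, Measure.restrict_univ]
  simp only [abs_of_pos (exp_pos _)]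

theorem integrableOn_Ioi_iff_integrable_exp_smul (φ : ℝ → E) :
    IntegrableOn φ (Ioi 0) ↔ Integrable (fun t => exp t • φ (exp t)) := by
  rw [← range_exp, ← image_univ, integrableOn_image_iff_integrableOn_abs_deriv_smul
    MeasurableSet.univ (fun t _ => (hasDerivAt_exp t).hasDerivWithinAt) exp_injective.injOn φ,
    integrableOn_univ]
  simp only [abs_of_pos (exp_pos _)]

theorem exp_mul_exp_rpow_sub_one (c t : ℝ) : exp t * exp t ^ (c - 1) = exp (c * t) := by
  rw [← exp_mul, ← exp_add]
  ring_nf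

theorem integral_Ioi_rpow_smul_eq (c : ℝ) (φ : ℝ → E) :
    ∫ r in Ioi 0, r ^ (c - 1) • φ r = ∫ t, exp (c * t) • φ (exp t) := by
  simp only [integral_Ioi_eq_integral_exp_smul, smul_smul, exp_mul_exp_rpow_sub_one]

theorem integrableOn_Ioi_rpow_smul_iff (c : ℝ) (φ : ℝ → E) :
    IntegrableOn (fun r => r ^ (c - 1) • φ r) (Ioi 0) ↔
      Integrable (fun t => exp (c * t) • φ (exp t)) := by
  simp only [integrableOn_Ioi_iff_integrable_exp_smul, smul_smul, exp_mul_exp_rpow_sub_one]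

theorem integral_Ioi_mul_rpow_eq (c : ℝ) (h : ℝ → ℝ) :
    ∫ r in Ioi 0, h r * r ^ (c - 1) = ∫ t, h (exp t) * exp (c * t) := by
  simpa only [smul_eq_mul, mul_comm] using integral_Ioi_rpow_smul_eq c h

theorem integrableOn_Ioi_mul_rpow_iff (c : ℝ) (h : ℝ → ℝ) :
    IntegrableOn (fun r => h r * r ^ (c - 1)) (Ioi 0) ↔
      Integrable (fun t => h (exp t) * exp (c * t)) := by
  simpa only [smul_eq_mul, mul_comm] using integrableOn_Ioi_rpow_smul_iff c h

end ExpSubstitution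

theorem exp_mul_le_one_add_exp_mul {c d : ℝ} (hdc : d ≤ c) (hc : c ≤ 0) (u : ℝ) :
    exp (c * u) ≤ 1 + exp (d * u) := by
  rcases le_total 0 u with hu | hu
  · exact (exp_le_one_iff.2 (mul_nonpos_of_nonpos_of_nonneg hc hu)).trans
      (le_add_of_nonneg_right (exp_pos _).le)
  · exact (exp_le_exp.2 (mul_le_mul_of_nonpos_right hdc hu)).trans
      (le_add_of_nonneg_left zero_le_one)

theorem MeasureTheory.Integrable.mul_exp_mul_of_le {w : ℝ → ℝ} {c d : ℝ} (hw : Integrable w)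
    (hwd : Integrable fun u => w u * exp (d * u)) (hw0 : ∀ u, 0 ≤ w u) (hdc : d ≤ c)
    (hc : c ≤ 0) : Integrable fun u => w u * exp (c * u) := by
  refine (hw.add hwd).mono' (hw.aestronglyMeasurable.mul (by fun_prop : Continuous
    fun u => exp (c * u)).aestronglyMeasurable) (ae_of_all _ fun u => ?_)
  rw [norm_of_nonneg (mul_nonneg (hw0 u) (exp_pos _).le), Pi.add_apply, ← mul_one_add]
  exact mul_le_mul_of_nonneg_left (exp_mul_le_one_add_exp_mul hdc hc u) (hw0 u)

theorem integrable_and_integral_le_of_lintegral_le {α : Type*} [MeasurableSpace α]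
    {μ : Measure α} {f g : α → ℝ} {c : ℝ} (hf : AEStronglyMeasurable f μ) (hf0 : ∀ a, 0 ≤ f a)
    (hg : Integrable g μ) (hg0 : ∀ a, 0 ≤ g a) (hc : 0 ≤ c)
    (h : ∫⁻ a, ENNReal.ofReal (f a) ∂μ ≤ ENNReal.ofReal c * ∫⁻ a, ENNReal.ofReal (g a) ∂μ) :
    Integrable f μ ∧ ∫ a, f a ∂μ ≤ c * ∫ a, g a ∂μ := by
  rw [← ofReal_integral_eq_lintegral_ofReal hg (ae_of_all _ hg0), ← ENNReal.ofReal_mul hc] at h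
  have hfi : Integrable f μ :=
    ⟨hf, (hasFiniteIntegral_iff_ofReal (ae_of_all _ hf0)).2 (h.trans_lt ENNReal.ofReal_lt_top)⟩
  rw [← ofReal_integral_eq_lintegral_ofReal hfi (ae_of_all _ hf0)] at h
  exact ⟨hfi, (ENNReal.ofReal_le_ofReal_iff (mul_nonneg hc (integral_nonneg hg0))).1 h⟩

theorem ofReal_norm_sq_mul_exp {E : Type*} [NormedAddCommGroup E] (x : E) (b t : ℝ) :
    ENNReal.ofReal (‖x‖ ^ 2 * exp (2 * b * t)) = (‖x‖ₑ * ENNReal.ofReal (exp (b * t))) ^ 2 := by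
  rw [← ofReal_norm, ← ENNReal.ofReal_mul (norm_nonneg x), ← ENNReal.ofReal_pow
    (mul_nonneg (norm_nonneg x) (exp_pos _).le), mul_pow, ← exp_nat_mul]
  ring_nf

theorem ENNReal.lintegral_mul_sq_le {α : Type*} [MeasurableSpace α] {μ : Measure α}
    {k φ : α → ℝ≥0∞} (hk : AEMeasurable k μ) (hφ : AEMeasurable φ μ) :
    (∫⁻ a, k a * φ a ∂μ) ^ 2 ≤ (∫⁻ a, k a ∂μ) * ∫⁻ a, k a * φ a ^ 2 ∂μ := by
  have hsplit : ∀ a, k a * φ a = k a ^ (2⁻¹ : ℝ) * (k a * φ a ^ 2) ^ (2⁻¹ : ℝ) := fun a => by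
    rw [ENNReal.mul_rpow_of_nonneg _ _ (by norm_num), ← mul_assoc, ← ENNReal.rpow_add_of_nonneg _ _
      (by norm_num) (by norm_num), ← ENNReal.rpow_natCast, ← ENNReal.rpow_mul]
    norm_num
  have holder := ENNReal.lintegral_mul_norm_pow_le (g := fun a => k a * φ a ^ 2) hk
    (hk.mul (hφ.pow_const 2)) (p := 2⁻¹) (q := 2⁻¹) (by norm_num) (by norm_num) (by norm_num)
  simp only [← hsplit] at holder
  calc (∫⁻ a, k a * φ a ∂μ) ^ 2
      ≤ ((∫⁻ a, k a ∂μ) ^ (2⁻¹ : ℝ) * (∫⁻ a, k a * φ a ^ 2 ∂μ) ^ (2⁻¹ : ℝ)) ^ 2 :=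
        pow_le_pow_left' holder 2
    _ = (∫⁻ a, k a ∂μ) * ∫⁻ a, k a * φ a ^ 2 ∂μ := by
        rw [mul_pow, ← ENNReal.rpow_natCast, ← ENNReal.rpow_mul, ← ENNReal.rpow_natCast,
          ← ENNReal.rpow_mul]
        norm_num

theorem lintegral_sq_lintegral_mul_comp_add_le {G : Type*} [MeasurableSpace G] [AddGroup G]
    [MeasurableAdd₂ G] {μ : Measure G} [SFinite μ] [μ.IsAddLeftInvariant] {k φ : G → ℝ≥0∞}
    (hk : Measurable k) (hφ : Measurable φ) :
    ∫⁻ t, (∫⁻ s, k s * φ (s + t) ∂μ) ^ 2 ∂μ ≤ (∫⁻ s, k s ∂μ) ^ 2 * ∫⁻ u, φ u ^ 2 ∂μ := by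
  have hφ2 : Measurable fun p : G × G => φ (p.1 + p.2) ^ 2 := (hφ.comp measurable_add).pow_const 2
  calc ∫⁻ t, (∫⁻ s, k s * φ (s + t) ∂μ) ^ 2 ∂μ
      ≤ ∫⁻ t, (∫⁻ s, k s ∂μ) * ∫⁻ s, k s * φ (s + t) ^ 2 ∂μ ∂μ :=
        lintegral_mono fun t => ENNReal.lintegral_mul_sq_le hk.aemeasurable
          (hφ.comp (measurable_add_const t)).aemeasurable
    _ = (∫⁻ s, k s ∂μ) * ∫⁻ s, k s * ∫⁻ t, φ (s + t) ^ 2 ∂μ ∂μ := by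
        rw [lintegral_const_mul _ (Measurable.lintegral_prod_right
          ((hk.comp measurable_snd).mul (hφ2.comp measurable_swap))),
          lintegral_lintegral_swap ((hk.comp measurable_snd).mul
            (hφ2.comp measurable_swap)).aemeasurable]
        congr 1
        exact lintegral_congr fun s =>
          lintegral_const_mul _ ((hφ.comp (measurable_const_add s)).pow_const 2)
    _ = (∫⁻ s, k s ∂μ) ^ 2 * ∫⁻ u, φ u ^ 2 ∂μ := by
        simp only [lintegral_add_left_eq_self fun u => φ u ^ 2]
        rw [lintegral_mul_const _ hk, sq, mul_assoc]

theorem lintegral_Ioi_ofReal_exp_mul {c : ℝ} (hc : c < 0) :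
    ∫⁻ s in Ioi 0, ENNReal.ofReal (exp (c * s)) = ENNReal.ofReal (-c)⁻¹ := by
  rw [← ofReal_integral_eq_lintegral_ofReal (integrableOn_exp_mul_Ioi hc 0)
    (ae_of_all _ fun s => (exp_pos _).le), integral_exp_mul_Ioi hc 0]
  simp [neg_div, inv_neg]

theorem lintegral_Iic_ofReal_exp_mul {c : ℝ} (hc : 0 < c) :
    ∫⁻ s in Iic 0, ENNReal.ofReal (exp (c * s)) = ENNReal.ofReal c⁻¹ := by
  rw [← ofReal_integral_eq_lintegral_ofReal (integrableOn_exp_mul_Iic hc 0)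
    (ae_of_all _ fun s => (exp_pos _).le), integral_exp_mul_Iic hc 0]
  simp

theorem lintegral_sq_mul_exp_le (m b : ℝ) {S : Set ℝ} (hS : MeasurableSet S)
    {ψ Φ : ℝ → ℝ≥0∞} (hψ : Measurable ψ)
    (hΦ : ∀ t, Φ t ≤ ∫⁻ s in S, ENNReal.ofReal (exp (-m * s)) * ψ (s + t)) :
    ∫⁻ t, (Φ t * ENNReal.ofReal (exp (b * t))) ^ 2 ≤
      (∫⁻ s in S, ENNReal.ofReal (exp (-(m + b) * s))) ^ 2 *
        ∫⁻ u, (ψ u * ENNReal.ofReal (exp (b * u))) ^ 2 := by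
  set k := S.indicator fun s => ENNReal.ofReal (exp (-(m + b) * s))
  set φ := fun u => ψ u * ENNReal.ofReal (exp (b * u))
  have hk : Measurable k :=
    (by fun_prop : Measurable fun s => ENNReal.ofReal (exp (-(m + b) * s))).indicator hS
  have hweight : ∀ s t, ENNReal.ofReal (exp (-m * s)) * ψ (s + t) * ENNReal.ofReal (exp (b * t)) =
      ENNReal.ofReal (exp (-(m + b) * s)) * φ (s + t) := fun s t => by
    simp only [φ]
    rw [mul_comm _ (ψ _), mul_left_comm _ (ψ _), mul_assoc, ← ENNReal.ofReal_mul (exp_pos _).le,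
      ← ENNReal.ofReal_mul (exp_pos _).le, ← exp_add, ← exp_add]
    ring_nf
  have hpoint : ∀ t, Φ t * ENNReal.ofReal (exp (b * t)) ≤ ∫⁻ s, k s * φ (s + t) := fun t => by
    calc Φ t * ENNReal.ofReal (exp (b * t))
        ≤ (∫⁻ s in S, ENNReal.ofReal (exp (-m * s)) * ψ (s + t)) * ENNReal.ofReal (exp (b * t)) :=
          mul_le_mul_left (hΦ t) _
      _ = ∫⁻ s, k s * φ (s + t) := by
          rw [← lintegral_mul_const' _ _ ENNReal.ofReal_ne_top, ← lintegral_indicator hS]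
          simp only [hweight, k, indicator_mul_left]
  calc ∫⁻ t, (Φ t * ENNReal.ofReal (exp (b * t))) ^ 2
      ≤ ∫⁻ t, (∫⁻ s, k s * φ (s + t)) ^ 2 := lintegral_mono fun t => pow_le_pow_left' (hpoint t) 2
    _ ≤ (∫⁻ s, k s) ^ 2 * ∫⁻ u, φ u ^ 2 :=
        lintegral_sq_lintegral_mul_comp_add_le hk (hψ.mul (by fun_prop))
    _ = _ := by rw [lintegral_indicator hS]

section ForwardSolution

variable {E : Type*} [NormedAddCommGroup E] [NormedSpace ℝ E]

noncomputable def forwardSolution (m : ℝ) (G : ℝ → E) (t : ℝ) : E :=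
  ∫ s in Ioi 0, exp (-m * s) • G (s + t)

theorem exp_smul_comp_add_eq (m s t : ℝ) (G : ℝ → E) :
    exp (-m * s) • G (s + t) = exp (m * t) • (exp (-m * (s + t)) • G (s + t)) := by
  rw [smul_smul, ← exp_add]
  ring_nf

theorem MeasureTheory.Integrable.exp_smul_comp_add {m : ℝ} {G : ℝ → E}
    (hG : Integrable fun u => exp (-m * u) • G u) (t : ℝ) :
    Integrable fun s => exp (-m * s) • G (s + t) := by
  simp only [exp_smul_comp_add_eq m _ t]
  exact (hG.comp_add_right t).smul _

theorem integral_exp_smul_comp_add (m t : ℝ) (G : ℝ → E) :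
    ∫ s, exp (-m * s) • G (s + t) = exp (m * t) • ∫ u, exp (-m * u) • G u := by
  simp only [exp_smul_comp_add_eq m _ t]
  rw [integral_smul, integral_add_right_eq_self (fun u => exp (-m * u) • G u)]

theorem setIntegral_Ioi_eq_neg_setIntegral_Iic {h : ℝ → E} (hh : Integrable h)
    (h0 : ∫ x, h x = 0) (a : ℝ) : ∫ x in Ioi a, h x = -∫ x in Iic a, h x := by
  have := integral_add_compl (measurableSet_Iic (a := a)) hh
  rw [compl_Iic, h0] at this
  exact eq_neg_of_add_eq_zero_right this

theorem forwardSolution_eq_neg_setIntegral_Iic {m : ℝ} {G : ℝ → E}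
    (hG : Integrable fun u => exp (-m * u) • G u) (hG0 : ∫ u, exp (-m * u) • G u = 0) (t : ℝ) :
    forwardSolution m G t = -∫ s in Iic 0, exp (-m * s) • G (s + t) :=
  setIntegral_Ioi_eq_neg_setIntegral_Iic (hG.exp_smul_comp_add t)
    (by rw [integral_exp_smul_comp_add, hG0, smul_zero]) 0

theorem enorm_setIntegral_exp_smul_comp_add_le (m t : ℝ) (S : Set ℝ) (G : ℝ → E) :
    ‖∫ s in S, exp (-m * s) • G (s + t)‖ₑ ≤
      ∫⁻ s in S, ENNReal.ofReal (exp (-m * s)) * ‖G (s + t)‖ₑ := by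
  refine (enorm_integral_le_lintegral_enorm _).trans_eq ?_
  simp only [enorm_smul, Real.enorm_of_nonneg (exp_pos _).le]

theorem MeasureTheory.StronglyMeasurable.forwardSolution {G : ℝ → E} (hG : StronglyMeasurable G)
    (m : ℝ) : StronglyMeasurable (forwardSolution m G) :=
  ((by fun_prop : Continuous fun p : ℝ × ℝ => exp (-m * p.2)).stronglyMeasurable.smul
    (hG.comp_measurable (measurable_snd.add measurable_fst))).integral_prod_right'

theorem lintegral_enorm_forwardSolution_mul_exp_sq_le {m b : ℝ} (hmb : m + b ≠ 0) {G : ℝ → E}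
    (hG : StronglyMeasurable G) (hGi : Integrable fun u => exp (-m * u) • G u)
    (hG0 : ∫ u, exp (-m * u) • G u = 0) :
    ∫⁻ t, (‖forwardSolution m G t‖ₑ * ENNReal.ofReal (exp (b * t))) ^ 2 ≤
      ENNReal.ofReal |m + b|⁻¹ ^ 2 * ∫⁻ u, (‖G u‖ₑ * ENNReal.ofReal (exp (b * u))) ^ 2 := by
  rcases hmb.lt_or_gt with hneg | hpos
  · rw [abs_of_neg hneg, ← lintegral_Iic_ofReal_exp_mul (neg_pos.2 hneg)]
    refine lintegral_sq_mul_exp_le m b measurableSet_Iic hG.enorm fun t => ?_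
    rw [forwardSolution_eq_neg_setIntegral_Iic hGi hG0, enorm_neg]
    exact enorm_setIntegral_exp_smul_comp_add_le m t _ G
  · have hκ := lintegral_Ioi_ofReal_exp_mul (neg_neg_of_pos hpos)
    rw [neg_neg] at hκ
    rw [abs_of_pos hpos, ← hκ]
    exact lintegral_sq_mul_exp_le m b measurableSet_Ioi hG.enorm fun t =>
      enorm_setIntegral_exp_smul_comp_add_le m t _ G

theorem integral_norm_forwardSolution_sq_mul_exp_le {m b : ℝ} (hmb : m + b ≠ 0) {G : ℝ → E}
    (hG : StronglyMeasurable G) (hGi : Integrable fun u => exp (-m * u) • G u)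
    (hG0 : ∫ u, exp (-m * u) • G u = 0) (hGb : Integrable fun u => ‖G u‖ ^ 2 * exp (2 * b * u)) :
    Integrable (fun t => ‖forwardSolution m G t‖ ^ 2 * exp (2 * b * t)) ∧
      ∫ t, ‖forwardSolution m G t‖ ^ 2 * exp (2 * b * t) ≤
        |m + b|⁻¹ ^ 2 * ∫ u, ‖G u‖ ^ 2 * exp (2 * b * u) := by
  refine integrable_and_integral_le_of_lintegral_le
    (((hG.forwardSolution m).aestronglyMeasurable.norm.pow 2).mul (by fun_prop))
    (fun t => by positivity) hGb (fun u => by positivity) (by positivity) ?_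
  simp only [ofReal_norm_sq_mul_exp, ENNReal.ofReal_pow (inv_nonneg.2 (abs_nonneg _))]
  exact lintegral_enorm_forwardSolution_mul_exp_sq_le hmb hG hGi hG0

end ForwardSolution

theorem stmt_15_general (m a : ℝ) (g : ℝ → ℂ) (hg : Measurable g)
    (h1 : IntegrableOn (fun r => ‖g r‖ ^ 2 / r) (Set.Ioi 0))
    (h2 : IntegrableOn (fun r => ‖g r‖ ^ 2 * r ^ (-2 * a - 1)) (Set.Ioi 0))
    (h3 : IntegrableOn (fun u => ‖g u‖ * u ^ (-m - 1)) (Set.Ioi 0))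
    (hobs : (∫ u in Set.Ioi (0 : ℝ), u ^ (-m - 1) • g u) = 0)
    (f : ℝ → ℂ)
    (hf : f = fun r => ∫ s in Set.Ioi (0 : ℝ), Real.exp (-m * s) • g (Real.exp s * r)) :
    (∀ r ∈ Set.Ioi (0 : ℝ),
        IntegrableOn (fun s => Real.exp (-m * s) • g (Real.exp s * r)) (Set.Ioi 0)) ∧
      ∀ b : ℝ, -a < b → b ≤ 0 → b ≠ -m →
        IntegrableOn (fun r => ‖f r‖ ^ 2 * r ^ (2 * b - 1)) (Set.Ioi 0) ∧
        Real.sqrt (∫ r in Set.Ioi (0 : ℝ), ‖f r‖ ^ 2 * r ^ (2 * b - 1)) ≤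
          |m + b|⁻¹ * Real.sqrt (∫ r in Set.Ioi (0 : ℝ), ‖g r‖ ^ 2 * r ^ (2 * b - 1)) := by
  set G : ℝ → ℂ := fun t => g (exp t)
  have hG : StronglyMeasurable G := (hg.comp measurable_exp).stronglyMeasurable
  have hGi : Integrable fun u => exp (-m * u) • G u := by
    refine (integrable_norm_iff (by fun_prop)).1 ?_
    simpa only [norm_smul, norm_of_nonneg (exp_pos _).le, mul_comm]
      using (integrableOn_Ioi_mul_rpow_iff (-m) _).1 h3
  have hG0 : ∫ u, exp (-m * u) • G u = 0 := by rwa [← integral_Ioi_rpow_smul_eq]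
  have hfG : ∀ t, f (exp t) = forwardSolution m G t := fun t => by
    simp only [hf, forwardSolution, G, ← exp_add]
  refine ⟨fun r hr => ?_, fun b hab hb0 hbm => ?_⟩
  · simpa only [G, exp_add, exp_log hr] using (hGi.exp_smul_comp_add (log r)).integrableOn
  have hG2 : Integrable fun u => ‖G u‖ ^ 2 := by
    simpa using (integrableOn_Ioi_mul_rpow_iff 0 fun r => ‖g r‖ ^ 2).1 (by
      simpa [div_eq_mul_inv, rpow_neg_one] using h1)
  have hGb : Integrable fun u => ‖G u‖ ^ 2 * exp (2 * b * u) :=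
    hG2.mul_exp_mul_of_le ((integrableOn_Ioi_mul_rpow_iff _ _).1 h2) (fun u => by positivity)
      (by linarith) (by linarith)
  obtain ⟨hint, hle⟩ := integral_norm_forwardSolution_sq_mul_exp_le
    (fun h => hbm (by linarith)) hG hGi hG0 hGb
  rw [integrableOn_Ioi_mul_rpow_iff, integral_Ioi_mul_rpow_eq, integral_Ioi_mul_rpow_eq]
  simp only [hfG]
  refine ⟨hint, ?_⟩
  calc sqrt (∫ t, ‖forwardSolution m G t‖ ^ 2 * exp (2 * b * t))
      ≤ sqrt (|m + b|⁻¹ ^ 2 * ∫ u, ‖G u‖ ^ 2 * exp (2 * b * u)) := sqrt_le_sqrt hle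
    _ = |m + b|⁻¹ * sqrt (∫ u, ‖G u‖ ^ 2 * exp (2 * b * u)) := by
        rw [sqrt_mul (by positivity), sqrt_sq (by positivity)]

/-- Realization of Theorem 5.4(2): if `g`, `g·r^{-a}` are in `L²((0,∞), dr/r)` with
`a > m > 0`, `∫₀^∞ |g| u^{-m} du/u < ∞`, and the obstruction `∫₀^∞ g(u) u^{-m} du/u`
vanishes, then the forward solution `f(r) = ∫₀^∞ e^{-ms} g(e^s r) ds` (absolutely
convergent for every `r > 0`) satisfies `‖f·r^b‖ ≤ |m+b|⁻¹ ‖g·r^b‖` for every weight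
`b ∈ (-a, 0]` with `b ≠ -m`. -/
theorem stmt_15 (m a : ℝ) (hm : 0 < m) (ham : m < a) (g : ℝ → ℂ) (hg : Measurable g)
    (h1 : IntegrableOn (fun r => ‖g r‖ ^ 2 / r) (Set.Ioi 0))
    (h2 : IntegrableOn (fun r => ‖g r‖ ^ 2 * r ^ (-2 * a - 1)) (Set.Ioi 0))
    (h3 : IntegrableOn (fun u => ‖g u‖ * u ^ (-m - 1)) (Set.Ioi 0))
    (hobs : (∫ u in Set.Ioi (0 : ℝ), u ^ (-m - 1) • g u) = 0)
    (f : ℝ → ℂ)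
    (hf : f = fun r => ∫ s in Set.Ioi (0 : ℝ), Real.exp (-m * s) • g (Real.exp s * r)) :
    (∀ r ∈ Set.Ioi (0 : ℝ),
        IntegrableOn (fun s => Real.exp (-m * s) • g (Real.exp s * r)) (Set.Ioi 0)) ∧
      ∀ b : ℝ, -a < b → b ≤ 0 → b ≠ -m →
        IntegrableOn (fun r => ‖f r‖ ^ 2 * r ^ (2 * b - 1)) (Set.Ioi 0) ∧
        Real.sqrt (∫ r in Set.Ioi (0 : ℝ), ‖f r‖ ^ 2 * r ^ (2 * b - 1)) ≤
          |m + b|⁻¹ * Real.sqrt (∫ r in Set.Ioi (0 : ℝ), ‖g r‖ ^ 2 * r ^ (2 * b - 1)) :=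
  stmt_15_general m a g hg h1 h2 h3 hobs f hf
end

section
/- Let m ∈ ℝ and ε > 0. Let φ : ℂ → ℂ be holomorphic on an open set containing the closed disk {z : |z + m| ≤ ε}, with φ(-m) = 0, and set K = sup{|φ(z)| : |z + m| = ε}. Let α be a real number with |α + m| ≤ ε/2 and suppose t ↦ φ(α + it) is measurable with N² := ∫_ℝ |φ(α + it)|² dt < ∞. Then ∫_ℝ |φ(α + it)|² / |α + it + m|² dt ≤ 4 ε^{-2} N² + ε^{-1} K². -/
/-! The quotient `φ z / (z + m)` is holomorphic on the disk `‖z + m‖ ≤ ε` (its singularity at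
`-m` is removable because `φ (-m) = 0`), so by the maximum modulus principle it is bounded there
by its boundary value `K / ε`. On the vertical line `Re z = α`, where `‖z + m‖ ≥ |Im z|`, the part
`|Im z| ≤ ε / 2` lies in this disk and contributes at most `ε · (K / ε)²`, while on the rest
`‖z + m‖ > ε / 2`, which costs the factor `4 ε⁻²` in front of `∫ ‖φ‖²`. -/

open MeasureTheory Metric Set

namespace Complex

variable {E : Type*} [NormedAddCommGroup E] [NormedSpace ℂ E] [CompleteSpace E]
  {f : ℂ → E} {c : ℂ} {r K : ℝ}

theorem norm_dslope_le_of_forall_mem_sphere_norm_le (hr : 0 < r)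
    (hf : DifferentiableOn ℂ f (closedBall c r)) (hfc : f c = 0)
    (hK : ∀ w ∈ sphere c r, ‖f w‖ ≤ K) {z : ℂ} (hz : z ∈ closedBall c r) :
    ‖dslope f c z‖ ≤ K / r := by
  have hdiff : DifferentiableOn ℂ (dslope f c) (ball c r) :=
    (differentiableOn_dslope (ball_mem_nhds c hr)).2 (hf.mono ball_subset_closedBall)
  have hcont : ContinuousOn (dslope f c) (closedBall c r) :=
    (continuousOn_dslope (closedBall_mem_nhds c hr)).2
      ⟨hf.continuousOn, hf.differentiableAt (closedBall_mem_nhds c hr)⟩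
  have hcl : DiffContOnCl ℂ (dslope f c) (ball c r) :=
    ⟨hdiff, by rwa [closure_ball c hr.ne']⟩
  refine norm_le_of_forall_mem_frontier_norm_le isBounded_ball hcl (fun w hw => ?_)
    (by rwa [closure_ball c hr.ne'])
  rw [frontier_ball c hr.ne'] at hw
  rw [dslope_of_ne f (ne_of_mem_sphere hw hr.ne'), slope_def_module, hfc, sub_zero, norm_smul,
    norm_inv, mem_sphere_iff_norm.1 hw, inv_mul_eq_div]
  exact div_le_div_of_nonneg_right (hK w hw) hr.le

theorem norm_div_norm_sub_le_of_forall_mem_sphere_norm_le (hr : 0 < r)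
    (hf : DifferentiableOn ℂ f (closedBall c r)) (hfc : f c = 0)
    (hK : ∀ w ∈ sphere c r, ‖f w‖ ≤ K) {z : ℂ} (hz : z ∈ closedBall c r) :
    ‖f z‖ / ‖z - c‖ ≤ K / r := by
  have hdslope := norm_dslope_le_of_forall_mem_sphere_norm_le hr hf hfc hK hz
  rcases eq_or_ne z c with rfl | hzc
  · simpa using (norm_nonneg _).trans hdslope
  · rwa [dslope_of_ne f hzc, slope_def_module, hfc, sub_zero, norm_smul, norm_inv,
      inv_mul_eq_div] at hdslope

theorem abs_le_norm_ofReal_add_mul_I_add_ofReal (α t m : ℝ) :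
    |t| ≤ ‖(α : ℂ) + t * I + m‖ := by
  simpa using abs_im_le_norm ((α : ℂ) + t * I + m)

theorem norm_ofReal_add_mul_I_add_ofReal_le (α t m : ℝ) :
    ‖(α : ℂ) + t * I + m‖ ≤ |α + m| + |t| := by
  simpa using norm_le_abs_re_add_abs_im ((α : ℂ) + t * I + m)

end Complex

theorem MeasureTheory.lintegral_ofReal_le_of_le_const_on_of_le_off {X : Type*}
    [MeasurableSpace X] {μ : Measure X} {s : Set X} (hs : MeasurableSet s) {F G : X → ℝ}
    {A : ℝ} (hG : Integrable G μ) (hG_nonneg : 0 ≤ G) (h_on : ∀ x ∈ s, F x ≤ A)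
    (h_off : ∀ x ∈ sᶜ, F x ≤ G x) :
    ∫⁻ x, ENNReal.ofReal (F x) ∂μ ≤
      ENNReal.ofReal A * μ s + ENNReal.ofReal (∫ x, G x ∂μ) := by
  rw [← lintegral_add_compl _ hs, ← setLIntegral_const,
    ofReal_integral_eq_lintegral_ofReal hG (.of_forall hG_nonneg)]
  exact add_le_add (setLIntegral_mono' hs fun x hx => ENNReal.ofReal_le_ofReal (h_on x hx))
    ((setLIntegral_mono' hs.compl fun x hx => ENNReal.ofReal_le_ofReal (h_off x hx)).trans
      (setLIntegral_le_lintegral _ _))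

open Complex in
theorem stmt_19_general (m ε : ℝ) (hε : 0 < ε) (φ : ℂ → ℂ) (U : Set ℂ)
    (hball : Metric.closedBall (-(m : ℂ)) ε ⊆ U) (hφ : DifferentiableOn ℂ φ U)
    (hzero : φ (-(m : ℂ)) = 0) (K : ℝ)
    (hK : ∀ z ∈ Metric.sphere (-(m : ℂ)) ε, ‖φ z‖ ≤ K)
    (α : ℝ) (hα : |α + m| ≤ ε / 2)
    (hN : Integrable fun t : ℝ => ‖φ ((α : ℂ) + (t : ℂ) * Complex.I)‖ ^ 2) :
    ∫⁻ t : ℝ, ENNReal.ofReal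
        (‖φ ((α : ℂ) + (t : ℂ) * Complex.I)‖ ^ 2
          / ‖(α : ℂ) + (t : ℂ) * Complex.I + (m : ℂ)‖ ^ 2) ≤
      ENNReal.ofReal
        (4 * ε⁻¹ ^ 2 * (∫ t : ℝ, ‖φ ((α : ℂ) + (t : ℂ) * Complex.I)‖ ^ 2) + ε⁻¹ * K ^ 2) := by
  set S := Icc (-(ε / 2)) (ε / 2)
  have hnear : ∀ t ∈ S,
      ‖φ (α + t * I)‖ ^ 2 / ‖(α : ℂ) + t * I + m‖ ^ 2 ≤ ε⁻¹ ^ 2 * K ^ 2 := by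
    intro t ht
    have hmem : (α : ℂ) + t * I ∈ closedBall (-(m : ℂ)) ε := by
      rw [mem_closedBall_iff_norm, sub_neg_eq_add]
      linarith [norm_ofReal_add_mul_I_add_ofReal_le α t m, abs_le.2 ht]
    have hquot :=
      norm_div_norm_sub_le_of_forall_mem_sphere_norm_le hε (hφ.mono hball) hzero hK hmem
    rw [sub_neg_eq_add] at hquot
    rw [← div_pow, ← mul_pow, inv_mul_eq_div]
    exact pow_le_pow_left₀ (by positivity) hquot 2
  have hfar : ∀ t ∈ Sᶜ, ‖φ (α + t * I)‖ ^ 2 / ‖(α : ℂ) + t * I + m‖ ^ 2 ≤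
      4 * ε⁻¹ ^ 2 * ‖φ (α + t * I)‖ ^ 2 := by
    intro t ht
    have hdist : ε / 2 < ‖(α : ℂ) + t * I + m‖ :=
      (lt_of_not_ge fun h => ht (abs_le.1 h)).trans_le
        (abs_le_norm_ofReal_add_mul_I_add_ofReal α t m)
    calc ‖φ (α + t * I)‖ ^ 2 / ‖(α : ℂ) + t * I + m‖ ^ 2
        ≤ ‖φ (α + t * I)‖ ^ 2 / (ε / 2) ^ 2 := by gcongr
      _ = 4 * ε⁻¹ ^ 2 * ‖φ (α + t * I)‖ ^ 2 := by field_simp; ring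
  have hint : 0 ≤ ∫ t : ℝ, ‖φ (α + t * I)‖ ^ 2 := integral_nonneg fun t => by positivity
  calc _ ≤ ENNReal.ofReal (ε⁻¹ ^ 2 * K ^ 2) * volume S +
        ENNReal.ofReal (∫ t : ℝ, 4 * ε⁻¹ ^ 2 * ‖φ (α + t * I)‖ ^ 2) :=
        lintegral_ofReal_le_of_le_const_on_of_le_off measurableSet_Icc (hN.const_mul _)
          (fun t => by positivity) hnear hfar
    _ = _ := by
      rw [Real.volume_Icc, sub_neg_eq_add, ← ENNReal.ofReal_mul (by positivity),
        integral_const_mul, ← ENNReal.ofReal_add (by positivity) (by positivity), add_comm]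
      congr 2
      field_simp
      ring

/-- Key estimate for vertical-line `L²` bounds near a removable singularity: if `φ` is
holomorphic on a neighborhood of the closed disk of radius `ε` around `-m`, vanishes at
`-m`, is bounded by `K` on the boundary circle, and `t ↦ φ(α + it)` is square-integrable
with `|α + m| ≤ ε/2`, then
`∫_ℝ |φ(α+it)|²/|α+it+m|² dt ≤ 4 ε⁻² ∫_ℝ |φ(α+it)|² dt + ε⁻¹ K²`. -/
theorem stmt_19 (m ε : ℝ) (hε : 0 < ε) (φ : ℂ → ℂ) (U : Set ℂ) (hU : IsOpen U)
    (hball : Metric.closedBall (-(m : ℂ)) ε ⊆ U) (hφ : DifferentiableOn ℂ φ U)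
    (hzero : φ (-(m : ℂ)) = 0) (K : ℝ)
    (hK : ∀ z ∈ Metric.sphere (-(m : ℂ)) ε, ‖φ z‖ ≤ K)
    (α : ℝ) (hα : |α + m| ≤ ε / 2)
    (hmeas : Measurable fun t : ℝ => φ ((α : ℂ) + (t : ℂ) * Complex.I))
    (hN : Integrable fun t : ℝ => ‖φ ((α : ℂ) + (t : ℂ) * Complex.I)‖ ^ 2) :
    ∫⁻ t : ℝ, ENNReal.ofReal
        (‖φ ((α : ℂ) + (t : ℂ) * Complex.I)‖ ^ 2
          / ‖(α : ℂ) + (t : ℂ) * Complex.I + (m : ℂ)‖ ^ 2) ≤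
      ENNReal.ofReal
        (4 * ε⁻¹ ^ 2 * (∫ t : ℝ, ‖φ ((α : ℂ) + (t : ℂ) * Complex.I)‖ ^ 2) + ε⁻¹ * K ^ 2) :=
  stmt_19_general m ε hε φ U hball hφ hzero K hK α hα hN
end
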